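/- arXiv:1604.03400 — 7 statements merged into one kernel-verified Lean document; each statement's English description precedes it below -/
import Mathlib

section
/- Finite-difference consistency estimate for the first difference quotient: Let a < b be real numbers and let v : ℝ → ℝ be twice continuously differentiable on [a,b]. Then for every x ∈ [a,b], |(v(b) − v(a))/(b − a) − v'(x)| ≤ √(2/3) · (b − a)^{1/2} · (∫_a^b v''(y)² dy)^{1/2}. -/
/-!
The difference quotient is the mean of `v'` over `[a, b]`, so its distance to `v' x` is
`(b - a)⁻¹ |∫ (v' y - v' x) dy|`. The fundamental theorem of calculus and Cauchy–Schwarz give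
`(v' y - v' x)² ≤ |y - x| ∫ v''²`. Integrating in `y`, using `∫ |y - x| dy ≤ (b - a)² / 2`,
and applying Cauchy–Schwarz once more bounds the square of the left side by
`(b - a) / 2 · ∫ v''²`, which is below `2 / 3 · (b - a) ∫ v''²`.
-/

open MeasureTheory Set

theorem sq_integral_le_mul_integral_sq {f : ℝ → ℝ} {c d : ℝ} (hcd : c ≤ d)
    (hf : IntervalIntegrable f volume c d)
    (hf2 : IntervalIntegrable (fun t => f t ^ 2) volume c d) :
    (∫ t in c..d, f t) ^ 2 ≤ (d - c) * ∫ t in c..d, f t ^ 2 := by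
  have hquad : ∀ l : ℝ,
      0 ≤ (d - c) * (l * l) + (-2 * ∫ t in c..d, f t) * l + ∫ t in c..d, f t ^ 2 := by
    intro l
    have hexpand : ∫ t in c..d, (f t - l) ^ 2
        = (d - c) * (l * l) + (-2 * ∫ t in c..d, f t) * l + ∫ t in c..d, f t ^ 2 := by
      have hpoly : ∀ t, (f t - l) ^ 2 = f t ^ 2 - l * 2 * f t + l ^ 2 := fun t => by ring
      simp_rw [hpoly]
      rw [intervalIntegral.integral_add (hf2.sub (hf.const_mul _)) intervalIntegrable_const,
        intervalIntegral.integral_sub hf2 (hf.const_mul _), intervalIntegral.integral_const_mul,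
        intervalIntegral.integral_const, smul_eq_mul]
      ring
    rw [← hexpand]
    exact intervalIntegral.integral_nonneg hcd fun t _ => sq_nonneg _
  have hdisc := discrim_le_zero hquad
  rw [discrim] at hdisc
  linarith

theorem sq_sub_le_abs_sub_mul_integral_sq_derivWithin {w : ℝ → ℝ} {a b x y : ℝ}
    (hw : ContDiffOn ℝ 1 w (Icc a b)) (hx : x ∈ Icc a b) (hy : y ∈ Icc a b) :
    (w y - w x) ^ 2 ≤ |y - x| * ∫ t in a..b, derivWithin w (Icc a b) t ^ 2 := by
  wlog hxy : x ≤ y generalizing x y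
  · rw [← neg_sub, neg_sq, abs_sub_comm]
    exact this hy hx (le_of_not_ge hxy)
  rcases hxy.eq_or_lt with rfl | hxy
  · simp
  set u := derivWithin w (Icc a b)
  have hab : a < b := hx.1.trans_lt (hxy.trans_le hy.2)
  have hu : ContinuousOn u (Icc a b) := hw.continuousOn_derivWithin (uniqueDiffOn_Icc hab) le_rfl
  have hsub : Icc x y ⊆ Icc a b := Icc_subset_Icc hx.1 hy.2
  have hderiv : ∀ t ∈ Ioo x y, HasDerivAt w (u t) t := fun t ht =>
    ((hw t (hsub (Ioo_subset_Icc_self ht))).differentiableWithinAt one_ne_zero).hasDerivWithinAt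
      |>.hasDerivAt (Icc_mem_nhds (hx.1.trans_lt ht.1) (ht.2.trans_le hy.2))
  have hftc : ∫ t in x..y, u t = w y - w x :=
    intervalIntegral.integral_eq_sub_of_hasDerivAt_of_le hxy.le (hw.continuousOn.mono hsub)
      hderiv ((hu.mono hsub).intervalIntegrable_of_Icc hxy.le)
  calc (w y - w x) ^ 2 = (∫ t in x..y, u t) ^ 2 := by rw [hftc]
    _ ≤ (y - x) * ∫ t in x..y, u t ^ 2 :=
      sq_integral_le_mul_integral_sq hxy.le ((hu.mono hsub).intervalIntegrable_of_Icc hxy.le)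
        (((hu.pow 2).mono hsub).intervalIntegrable_of_Icc hxy.le)
    _ ≤ |y - x| * ∫ t in a..b, u t ^ 2 := by
      rw [abs_of_nonneg (sub_nonneg.2 hxy.le)]
      gcongr
      exact intervalIntegral.integral_mono_interval hx.1 hxy.le hy.2
        (Filter.Eventually.of_forall fun t => sq_nonneg _)
        ((hu.pow 2).intervalIntegrable_of_Icc hab.le)

theorem integral_abs_sub_eq {a b x : ℝ} (hx : x ∈ Icc a b) :
    ∫ y in a..b, |y - x| = ((x - a) ^ 2 + (b - x) ^ 2) / 2 := by
  have hcont : Continuous fun y : ℝ => |y - x| := by fun_prop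
  rw [← intervalIntegral.integral_add_adjacent_intervals (hcont.intervalIntegrable a x)
    (hcont.intervalIntegrable x b)]
  have hleft : ∫ y in a..x, |y - x| = ∫ y in a..x, (x - y) :=
    intervalIntegral.integral_congr fun y hy => by
      rw [uIcc_of_le hx.1] at hy
      rw [abs_of_nonpos (sub_nonpos.2 hy.2), neg_sub]
  have hright : ∫ y in x..b, |y - x| = ∫ y in x..b, (y - x) :=
    intervalIntegral.integral_congr fun y hy => by
      rw [uIcc_of_le hx.2] at hy
      rw [abs_of_nonneg (sub_nonneg.2 hy.1)]
  rw [hleft, hright, intervalIntegral.integral_comp_sub_left (fun y => y),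
    intervalIntegral.integral_comp_sub_right (fun y => y), integral_id, integral_id]
  ring

theorem integral_sq_sub_le_mul_integral_sq_derivWithin {w : ℝ → ℝ} {a b x : ℝ}
    (hw : ContDiffOn ℝ 1 w (Icc a b)) (hx : x ∈ Icc a b) :
    ∫ y in a..b, (w y - w x) ^ 2 ≤
      (b - a) ^ 2 / 2 * ∫ t in a..b, derivWithin w (Icc a b) t ^ 2 := by
  set S := ∫ t in a..b, derivWithin w (Icc a b) t ^ 2
  have hab : a ≤ b := hx.1.trans hx.2
  have hS : 0 ≤ S := intervalIntegral.integral_nonneg hab fun t _ => sq_nonneg _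
  calc ∫ y in a..b, (w y - w x) ^ 2 ≤ ∫ y in a..b, |y - x| * S :=
        intervalIntegral.integral_mono_on hab
          (((hw.continuousOn.sub continuousOn_const).pow 2).intervalIntegrable_of_Icc hab)
          ((by fun_prop : Continuous fun y => |y - x| * S).intervalIntegrable a b)
          fun y hy => sq_sub_le_abs_sub_mul_integral_sq_derivWithin hw hx hy
    _ = ((x - a) ^ 2 + (b - x) ^ 2) / 2 * S := by
        rw [intervalIntegral.integral_mul_const, integral_abs_sub_eq hx]
    _ ≤ (b - a) ^ 2 / 2 * S := by
        gcongr
        nlinarith [hx.1, hx.2]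

/-- Finite-difference consistency estimate for the first difference quotient. -/
theorem stmt2 (a b : ℝ) (hab : a < b) (v : ℝ → ℝ)
    (hv : ContDiffOn ℝ 2 v (Set.Icc a b)) (x : ℝ) (hx : x ∈ Set.Icc a b) :
    |(v b - v a) / (b - a) - derivWithin v (Set.Icc a b) x| ≤
      Real.sqrt (2 / 3) * (b - a) ^ ((1 : ℝ) / 2) *
        (∫ y in a..b, derivWithin (derivWithin v (Set.Icc a b)) (Set.Icc a b) y ^ 2) ^
          ((1 : ℝ) / 2) := by
  set w := derivWithin v (Icc a b)
  set S := ∫ y in a..b, derivWithin w (Icc a b) y ^ 2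
  have hba : 0 < b - a := sub_pos.2 hab
  have hw : ContDiffOn ℝ 1 w (Icc a b) := hv.derivWithin (uniqueDiffOn_Icc hab) (by norm_num)
  have hwx : ContinuousOn (fun y => w y - w x) (Icc a b) := hw.continuousOn.sub continuousOn_const
  have hmean : (v b - v a) / (b - a) - w x = (∫ y in a..b, (w y - w x)) / (b - a) := by
    rw [intervalIntegral.integral_sub (hw.continuousOn.intervalIntegrable_of_Icc hab.le)
        intervalIntegrable_const,
      intervalIntegral.integral_derivWithin_Icc_of_contDiffOn_Icc (hv.of_le (by norm_num)) hab.le,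
      intervalIntegral.integral_const, smul_eq_mul]
    field_simp
  have hkey : ((v b - v a) / (b - a) - w x) ^ 2 ≤ 2 / 3 * (b - a) * S := by
    have hS : 0 ≤ S := intervalIntegral.integral_nonneg hab.le fun t _ => sq_nonneg _
    rw [hmean, div_pow, div_le_iff₀ (pow_pos hba 2)]
    calc (∫ y in a..b, (w y - w x)) ^ 2 ≤ (b - a) * ∫ y in a..b, (w y - w x) ^ 2 :=
          sq_integral_le_mul_integral_sq hab.le (hwx.intervalIntegrable_of_Icc hab.le)
            ((hwx.pow 2).intervalIntegrable_of_Icc hab.le)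
      _ ≤ (b - a) * ((b - a) ^ 2 / 2 * S) := by
          gcongr
          exact integral_sq_sub_le_mul_integral_sq_derivWithin hw hx
      _ ≤ 2 / 3 * (b - a) * S * (b - a) ^ 2 := by
          nlinarith [mul_nonneg (pow_pos hba 3).le hS]
  calc _ ≤ Real.sqrt (2 / 3 * (b - a) * S) := Real.abs_le_sqrt hkey
    _ = _ := by
      rw [Real.sqrt_mul (by positivity), Real.sqrt_mul (by norm_num), Real.sqrt_eq_rpow,
        Real.sqrt_eq_rpow, Real.sqrt_eq_rpow]
end

section
/- ℓ²-stability of the second difference quotient: Let N ≥ 1 be an integer, h = 1/N, x_j = j·h, and let v : ℝ → ℝ be twice continuously differentiable and 1-periodic. Then Σ_{j=1}^N |(v(x_{j+1}) − 2v(x_j) + v(x_{j−1}))/h²|² · h ≤ (4/3) · ∫₀¹ v''(y)² dy. -/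
/-!
Taylor's formula with integral remainder writes the second difference
`v (x + h) - 2 v x + v (x - h)` as the sum of the two remainders
`∫ₓ^{x ± h} (x ± h - t) v'' t dt`. Cauchy–Schwarz, with `∫₀^h s² ds = h³ / 3`, bounds the square
of each remainder by `h³ / 3` times the integral of `v''²` over its half-cell, and
`(A + B)² ≤ 2 A² + 2 B²` gives `h · |Δ²v / h²|² ≤ 2 / 3 · ∫_{x-h}^{x+h} v''²`. Summed over the grid,
every cell is counted twice, and by periodicity each of the two sums is `∫₀¹ v''²`.
-/

open MeasureTheory intervalIntegral

theorem Function.Periodic.deriv {𝕜 F : Type*} [NontriviallyNormedField 𝕜] [NormedAddCommGroup F]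
    [NormedSpace 𝕜 F] {f : 𝕜 → F} {c : 𝕜} (hf : Function.Periodic f c) :
    Function.Periodic (deriv f) c := fun x => by
  have hshift : (fun y => f (y + c)) = f := funext hf
  rw [← deriv_comp_add_const, hshift]

theorem sq_integral_mul_le_integral_sq_mul_integral_sq {α : Type*} [MeasurableSpace α]
    {μ : Measure α} {f g : α → ℝ} (hf : Integrable (fun x => f x ^ 2) μ)
    (hg : Integrable (fun x => g x ^ 2) μ) (hfg : Integrable (fun x => f x * g x) μ) :
    (∫ x, f x * g x ∂μ) ^ 2 ≤ (∫ x, f x ^ 2 ∂μ) * ∫ x, g x ^ 2 ∂μ := by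
  have hquad : ∀ s : ℝ, 0 ≤ (∫ x, f x ^ 2 ∂μ) * (s * s) + 2 * (∫ x, f x * g x ∂μ) * s
      + ∫ x, g x ^ 2 ∂μ := fun s => by
    have hexpand : ∫ x, (s * f x + g x) ^ 2 ∂μ = (∫ x, f x ^ 2 ∂μ) * (s * s)
        + 2 * (∫ x, f x * g x ∂μ) * s + ∫ x, g x ^ 2 ∂μ := by
      have hpt : (fun x => (s * f x + g x) ^ 2)
          = fun x => (s * s) * f x ^ 2 + (2 * s) * (f x * g x) + g x ^ 2 := by
        funext x; ring
      have hfirst : Integrable (fun x => (s * s) * f x ^ 2 + (2 * s) * (f x * g x)) μ :=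
        (hf.const_mul _).add (hfg.const_mul _)
      rw [hpt, integral_add hfirst hg,
        integral_add (hf.const_mul _) (hfg.const_mul _), MeasureTheory.integral_const_mul,
        MeasureTheory.integral_const_mul]
      ring
    exact hexpand ▸ integral_nonneg fun x => sq_nonneg _
  have := discrim_le_zero hquad
  rw [discrim] at this
  linarith

theorem intervalIntegral.sq_integral_mul_le {f g : ℝ → ℝ} {a b : ℝ}
    (hf : IntervalIntegrable (fun x => f x ^ 2) volume a b)
    (hg : IntervalIntegrable (fun x => g x ^ 2) volume a b)
    (hfg : IntervalIntegrable (fun x => f x * g x) volume a b) :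
    (∫ x in a..b, f x * g x) ^ 2 ≤ (∫ x in a..b, f x ^ 2) * ∫ x in a..b, g x ^ 2 := by
  rcases le_total a b with hab | hba
  · simp only [integral_of_le hab]
    exact sq_integral_mul_le_integral_sq_mul_integral_sq hf.1 hg.1 hfg.1
  · simp only [integral_symm b a, integral_of_le hba, neg_sq, neg_mul_neg]
    exact sq_integral_mul_le_integral_sq_mul_integral_sq hf.2 hg.2 hfg.2

theorem intervalIntegral.integral_sub_sq (a b : ℝ) :
    ∫ t in a..b, (b - t) ^ 2 = (b - a) ^ 3 / 3 := by
  rw [integral_comp_sub_left (fun t => t ^ 2), integral_pow]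
  norm_num

theorem intervalIntegral.sum_Icc_integral_adjacent_intervals {E : Type*} [NormedAddCommGroup E]
    [NormedSpace ℝ E] {μ : Measure ℝ} {f : ℝ → E} {a : ℤ → ℝ} {m n : ℤ} (hmn : m ≤ n)
    (hf : ∀ x y, IntervalIntegrable f μ x y) :
    ∑ k ∈ Finset.Icc (m + 1) n, ∫ x in a (k - 1)..a k, f x ∂μ = ∫ x in a m..a n, f x ∂μ := by
  induction n, hmn using Int.leInduction with
  | base => simp
  | succ n hmn ih =>
    rw [← Finset.insert_Icc_right_eq_Icc_add_one (by omega), Finset.sum_insert (by simp), ih,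
      add_sub_cancel_right, add_comm, integral_add_adjacent_intervals (hf _ _) (hf _ _)]

theorem Function.Periodic.sum_Icc_integral_grid {f : ℝ → ℝ} (hf : Function.Periodic f 1)
    (hf_int : ∀ x y, IntervalIntegrable f volume x y) {N : ℕ} (hN : 1 ≤ N) (c : ℝ) :
    ∑ j ∈ Finset.Icc (1 : ℤ) N, ∫ t in ((j : ℝ) / N - 1 / N + c)..((j : ℝ) / N + c), f t
      = ∫ t in (0 : ℝ)..1, f t := by
  have hN₀ : (N : ℝ) ≠ 0 := by positivity
  have htelescope := sum_Icc_integral_adjacent_intervals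
    (a := fun k : ℤ => (k : ℝ) / N + c) (m := 0) (n := N) (by omega) hf_int
  simp only [zero_add, Int.cast_sub, Int.cast_one, sub_div, Int.cast_natCast, div_self hN₀,
    Int.cast_zero, zero_div] at htelescope
  rw [htelescope, add_comm 1, hf.intervalIntegral_add_eq c 0, zero_add]

section SecondDifference

variable {v v' v'' : ℝ → ℝ} (hv : ∀ t, HasDerivAt v (v' t) t)
  (hv' : ∀ t, HasDerivAt v' (v'' t) t) (hv'' : Continuous v'')
include hv hv' hv''

theorem integral_sub_mul_eq_taylor_remainder (a b : ℝ) :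
    ∫ t in a..b, (b - t) * v'' t = v b - v a - (b - a) * v' a := by
  have hv'_cont : Continuous v' := continuous_iff_continuousAt.2 fun t => (hv' t).continuousAt
  rw [integral_mul_deriv_eq_deriv_mul (u' := fun _ => -1)
      (fun t _ => (hasDerivAt_id' t).const_sub b) (fun t _ => hv' t)
      (continuous_const.intervalIntegrable _ _) (hv''.intervalIntegrable _ _)]
  simp only [neg_one_mul, intervalIntegral.integral_neg]
  rw [integral_eq_sub_of_hasDerivAt (fun t _ => hv t) (hv'_cont.intervalIntegrable _ _)]
  ring

theorem sq_taylor_remainder_le (a b : ℝ) :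
    (v b - v a - (b - a) * v' a) ^ 2 ≤ (b - a) ^ 3 / 3 * ∫ t in a..b, v'' t ^ 2 := by
  rw [← integral_sub_mul_eq_taylor_remainder hv hv' hv'', ← integral_sub_sq]
  exact sq_integral_mul_le ((by fun_prop : Continuous fun t => (b - t) ^ 2).intervalIntegrable _ _)
    ((hv''.pow 2).intervalIntegrable _ _)
    ((by fun_prop : Continuous fun t => (b - t) * v'' t).intervalIntegrable _ _)

theorem sq_second_difference_le (x h : ℝ) :
    (v (x + h) - 2 * v x + v (x - h)) ^ 2
      ≤ 2 * h ^ 3 / 3 * ((∫ t in (x - h)..x, v'' t ^ 2) + ∫ t in x..(x + h), v'' t ^ 2) := by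
  have hright : (v (x + h) - v x - h * v' x) ^ 2 ≤ h ^ 3 / 3 * ∫ t in x..(x + h), v'' t ^ 2 := by
    simpa using sq_taylor_remainder_le hv hv' hv'' x (x + h)
  have hleft : (v (x - h) - v x - -h * v' x) ^ 2 ≤ h ^ 3 / 3 * ∫ t in (x - h)..x, v'' t ^ 2 := by
    have := sq_taylor_remainder_le hv hv' hv'' x (x - h)
    rwa [integral_symm, sub_sub_cancel_left, Odd.neg_pow (by decide), neg_div, neg_mul_neg] at this
  nlinarith [sq_nonneg (v (x + h) - v x - h * v' x - (v (x - h) - v x - -h * v' x))]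

theorem second_difference_quotient_sq_mul_le (x : ℝ) {h : ℝ} (hh : 0 < h) :
    ((v (x + h) - 2 * v x + v (x - h)) / h ^ 2) ^ 2 * h
      ≤ 2 / 3 * ((∫ t in (x - h)..x, v'' t ^ 2) + ∫ t in x..(x + h), v'' t ^ 2) := by
  have hscale : ((v (x + h) - 2 * v x + v (x - h)) / h ^ 2) ^ 2 * h
      = (v (x + h) - 2 * v x + v (x - h)) ^ 2 / h ^ 3 := by
    field_simp
  rw [hscale, div_le_iff₀ (by positivity)]
  linarith [sq_second_difference_le hv hv' hv'' x h]

end SecondDifference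

/-- ℓ²-stability of the second difference quotient for 1-periodic C² functions. -/
theorem stmt3 (N : ℕ) (hN : 1 ≤ N) (v : ℝ → ℝ) (hv : ContDiff ℝ 2 v)
    (hper : ∀ x, v (x + 1) = v x) :
    ∑ j ∈ Finset.Icc (1 : ℤ) (N : ℤ),
        ((v (((j : ℝ) + 1) / N) - 2 * v ((j : ℝ) / N) + v (((j : ℝ) - 1) / N)) /
            ((1 : ℝ) / N) ^ 2) ^ 2 * ((1 : ℝ) / N)
      ≤ 4 / 3 * ∫ y in Set.Ioo (0 : ℝ) 1, deriv (deriv v) y ^ 2 := by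
  have hv₁ : ∀ t, HasDerivAt v (deriv v t) t := fun t =>
    (hv.differentiable (by norm_num) t).hasDerivAt
  have hv₂ : ∀ t, HasDerivAt (deriv v) (deriv (deriv v) t) t := fun t =>
    ((hv.iterate_deriv' 1 1).differentiable one_ne_zero t).hasDerivAt
  have hv₃ : Continuous (deriv (deriv v)) := (hv.iterate_deriv' 0 2).continuous
  set g := fun t => deriv (deriv v) t ^ 2 with hg
  have hg_int : ∀ x y, IntervalIntegrable g volume x y := (hv₃.pow 2).intervalIntegrable
  have hg_per : Function.Periodic g 1 := fun t => by
    simp only [hg, (Function.Periodic.deriv hper).deriv t]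
  calc _ ≤ ∑ j ∈ Finset.Icc (1 : ℤ) N, 2 / 3 * ((∫ t in ((j : ℝ) / N - 1 / N)..(j : ℝ) / N, g t)
          + ∫ t in (j : ℝ) / N..((j : ℝ) / N + 1 / N), g t) := by
        refine Finset.sum_le_sum fun j _ => ?_
        rw [add_div (j : ℝ) 1, sub_div (j : ℝ) 1]
        exact second_difference_quotient_sq_mul_le hv₁ hv₂ hv₃ _ (by positivity)
    _ = 2 / 3 * ((∫ t in (0 : ℝ)..1, g t) + ∫ t in (0 : ℝ)..1, g t) := by
        have h₀ := hg_per.sum_Icc_integral_grid hg_int hN 0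
        have h₁ := hg_per.sum_Icc_integral_grid hg_int hN (1 / N)
        simp only [add_zero, sub_add_cancel] at h₀ h₁
        rw [← Finset.mul_sum, Finset.sum_add_distrib, h₀, h₁]
    _ = 4 / 3 * ∫ y in Set.Ioo (0 : ℝ) 1, g y := by
        rw [integral_of_le zero_le_one, integral_Ioc_eq_integral_Ioo]
        ring
end

section
/- Upper semicontinuity of the discrete adhesion energy: Let ψ : ℝ → ℝ be continuous and 1-periodic, let v : ℝ → ℝ be continuously differentiable and 1-periodic with v(x) ≥ ψ(x) for all x, let γ > 0, and let ζ be a regularizer. Let Nₙ → ∞ be integers, hₙ = 1/Nₙ, δₙ > 0 with δₙ → 0, and for each n let vₙ be (the piecewise-affine function of) a discrete curve on the mesh of size hₙ such that sup_{x∈[0,1]} |vₙ(x) − v(x)| → 0 and ∫₀¹ |vₙ'(x) − v'(x)| dx → 0. Then limsup_{n→∞} A_{hₙ,δₙ}[vₙ] ≤ γ · ∫_{{x ∈ (0,1) : v(x) = ψ(x)}} √(1 + v'(x)²) dx. -/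
open Filter MeasureTheory

noncomputable section

/-- mesh point `x_j = j·h` with `h = 1/N`. -/
def xj (N : ℕ) (j : ℤ) : ℝ := j * ((1 : ℝ) / N)

/-- first difference quotient `d_j = (v_j − v_{j−1})/h`. -/
def dq (N : ℕ) (v : ℤ → ℝ) (j : ℤ) : ℝ := (v j - v (j - 1)) / ((1 : ℝ) / N)

/-- second difference quotient `D_j = (v_{j+1} − 2v_j + v_{j−1})/h²`. -/
def Dq (N : ℕ) (v : ℤ → ℝ) (j : ℤ) : ℝ :=
  (v (j + 1) - 2 * v j + v (j - 1)) / ((1 : ℝ) / N) ^ 2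

/-- half segment length `l_j = (h/2)·√(1 + d_j²)`. -/
def lq (N : ℕ) (v : ℤ → ℝ) (j : ℤ) : ℝ :=
  ((1 : ℝ) / N) / 2 * Real.sqrt (1 + dq N v j ^ 2)

/-- angle `θ_j` between consecutive segments. -/
def θq (N : ℕ) (v : ℤ → ℝ) (j : ℤ) : ℝ :=
  Real.arccos ((1 + dq N v j * dq N v (j + 1)) /
    (Real.sqrt (1 + dq N v j ^ 2) * Real.sqrt (1 + dq N v (j + 1) ^ 2)))

/-- discrete bending energy `B_h`. -/
def Bh (C : ℝ) (N : ℕ) (v : ℤ → ℝ) : ℝ :=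
  C / 2 * ∑ j ∈ Finset.Icc (1 : ℤ) N, θq N v j ^ 2 *
    ((lq N v j ^ 3 + lq N v (j + 1) ^ 3) /
      (lq N v j * lq N v (j + 1) * (lq N v j + lq N v (j + 1)) ^ 2))

/-- discrete tension `T_h`. -/
def Th (σ : ℝ) (N : ℕ) (v : ℤ → ℝ) : ℝ :=
  σ * ∑ j ∈ Finset.Icc (1 : ℤ) N, 2 * lq N v j

/-- a regularizer `ζ`. -/
def IsRegularizer (ζ : ℝ → ℝ) : Prop :=
  ContDiff ℝ 1 ζ ∧ (∀ t, 0 ≤ ζ t ∧ ζ t ≤ 1) ∧ (∀ t, ζ (-t) = ζ t) ∧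
    (∀ t, 1 < t → ζ t = 0) ∧ AntitoneOn ζ (Set.Icc 0 1) ∧ ζ 0 = 1

/-- discrete adhesion energy `A_{h,δ}` (with `ζ_δ(t) = ζ(t/δ)`). -/
def Ah (γ : ℝ) (ζ : ℝ → ℝ) (δ : ℝ) (ψ : ℝ → ℝ) (N : ℕ) (v : ℤ → ℝ) : ℝ :=
  γ * ∑ j ∈ Finset.Icc (1 : ℤ) N,
    ζ ((v (j - 1) - ψ (xj N (j - 1))) / δ) * ζ ((v j - ψ (xj N j)) / δ) * (2 * lq N v j)

/-- discrete penalty `P_{h,ρ}`. -/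
def Ph (ρ : ℝ) (ψ : ℝ → ℝ) (N : ℕ) (v : ℤ → ℝ) : ℝ :=
  1 / ρ * ∑ j ∈ Finset.Icc (1 : ℤ) N, max (ψ (xj N j) - v j) 0 ^ 2 * ((1 : ℝ) / N)

/-- total discrete energy `E_{h,δ,ρ}`. -/
def Eh (C σ γ : ℝ) (ζ ψ : ℝ → ℝ) (N : ℕ) (δ ρ : ℝ) (v : ℤ → ℝ) : ℝ :=
  Bh C N v + Th σ N v - Ah γ ζ δ ψ N v + Ph ρ ψ N v

/-- piecewise-affine interpolant of a discrete curve: on `[x_{j−1}, x_j]` it is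
`v_{j−1} + d_j·(x − x_{j−1})`. -/
def interp (N : ℕ) (v : ℤ → ℝ) (x : ℝ) : ℝ :=
  v (⌈x * N⌉ - 1) + dq N v ⌈x * N⌉ * (x - xj N (⌈x * N⌉ - 1))

/-- slope step function of a discrete curve: equal to `d_j` on `(x_{j−1}, x_j)`. -/
def slopeFn (N : ℕ) (v : ℤ → ℝ) (x : ℝ) : ℝ := dq N v ⌈x * N⌉

/-!
The `j`-th term of `A_{h,δ}[v_h]` is at most `2 l_j = ∫_{(x_{j-1}, x_j]} √(1 + d_j²)`, and it
vanishes unless `v_h(x_j)` is `δ`-close to `ψ(x_j)`. As `t ↦ √(1 + t²)` is 1-Lipschitz, this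
integral is at most `∫ √(1 + v'²) + ∫ |v_h' − v'|` over the same cell. Once `δ`, the mesh size and
`sup |v_h − v|` are small compared with `η`, every cell whose term survives lies in the sublevel
set `{v − ψ ≤ η}`, so that
`A_{h,δ}[v_h] ≤ γ ∫_{(0,1] ∩ {v − ψ ≤ η}} √(1 + v'²) + γ ‖v_h' − v'‖_{L¹}`.
Let `h → 0` and then `η → 0`: the sublevel sets decrease to the contact set.
-/

open Set Topology

lemma sqrt_one_add_sq_le (d a : ℝ) : √(1 + d ^ 2) ≤ √(1 + a ^ 2) + |d - a| := by
  have ha : |a| * |d - a| ≤ √(1 + a ^ 2) * |d - a| :=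
    mul_le_mul_of_nonneg_right (Real.abs_le_sqrt (by linarith)) (abs_nonneg _)
  rw [Real.sqrt_le_left (by positivity), add_sq, Real.sq_sqrt (by positivity), sq_abs]
  nlinarith [le_abs_self (a * (d - a)), abs_mul a (d - a)]

lemma IsRegularizer.nonneg {ζ : ℝ → ℝ} (hζ : IsRegularizer ζ) (t : ℝ) : 0 ≤ ζ t :=
  (hζ.2.1 t).1

lemma IsRegularizer.le_one {ζ : ℝ → ℝ} (hζ : IsRegularizer ζ) (t : ℝ) : ζ t ≤ 1 :=
  (hζ.2.1 t).2

lemma IsRegularizer.eq_zero_of_one_lt_abs {ζ : ℝ → ℝ} (hζ : IsRegularizer ζ) {t : ℝ}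
    (ht : 1 < |t|) : ζ t = 0 := by
  rcases abs_cases t with ⟨h, _⟩ | ⟨h, _⟩
  · exact hζ.2.2.2.1 t (h ▸ ht)
  · rw [← hζ.2.2.1 t]
    exact hζ.2.2.2.1 (-t) (h ▸ ht)

lemma xj_sub_xj_sub_one (N : ℕ) (j : ℤ) : xj N j - xj N (j - 1) = 1 / N := by
  simp only [xj]
  push_cast
  ring

def cell (N : ℕ) (j : ℤ) : Set ℝ := Ioc (xj N (j - 1)) (xj N j)

section Mesh

variable {N : ℕ}

lemma xj_mem_cell (hN : 0 < N) (j : ℤ) : xj N j ∈ cell N j := by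
  have : (0 : ℝ) < 1 / N := by positivity
  exact right_mem_Ioc.2 (by linarith [xj_sub_xj_sub_one N j])

lemma ceil_mul_eq_iff_mem_cell (hN : 0 < N) {x : ℝ} {j : ℤ} : ⌈x * N⌉ = j ↔ x ∈ cell N j := by
  have hN' : (0 : ℝ) < N := by exact_mod_cast hN
  rw [cell, mem_Ioc, xj, xj, mul_one_div, mul_one_div, div_lt_iff₀ hN', le_div_iff₀ hN',
    Int.ceil_eq_iff]
  push_cast
  rfl

lemma pairwise_disjoint_cell (hN : 0 < N) : Pairwise fun i j => Disjoint (cell N i) (cell N j) :=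
  fun _ _ hij => disjoint_left.2 fun _ hi hj =>
    hij (((ceil_mul_eq_iff_mem_cell hN).2 hi).symm.trans ((ceil_mul_eq_iff_mem_cell hN).2 hj))

lemma biUnion_cell (hN : 0 < N) : ⋃ j ∈ Finset.Icc (1 : ℤ) N, cell N j = Ioc 0 1 := by
  have hN' : (0 : ℝ) < N := by exact_mod_cast hN
  ext x
  simp only [mem_iUnion, Finset.mem_Icc, exists_prop, ← ceil_mul_eq_iff_mem_cell hN,
    exists_eq_right', Int.one_le_ceil_iff, Int.ceil_le, Int.cast_natCast, mem_Ioc]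
  rw [mul_pos_iff_of_pos_right hN', mul_le_iff_le_one_left hN']

lemma cell_subset_Icc (hN : 0 < N) {j : ℤ} (hj : j ∈ Finset.Icc (1 : ℤ) N) :
    cell N j ⊆ Icc 0 1 :=
  (subset_biUnion_of_mem (u := cell N) (Finset.mem_coe.2 hj)).trans
    ((biUnion_cell hN).subset.trans Ioc_subset_Icc_self)

lemma slopeFn_eq_of_mem_cell (hN : 0 < N) (w : ℤ → ℝ) {j : ℤ} {x : ℝ} (hx : x ∈ cell N j) :
    slopeFn N w x = dq N w j := by
  rw [slopeFn, (ceil_mul_eq_iff_mem_cell hN).2 hx]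

lemma interp_xj (hN : 0 < N) (w : ℤ → ℝ) (j : ℤ) : interp N w (xj N j) = w j := by
  have hN' : (1 : ℝ) / N ≠ 0 := by positivity
  rw [interp, (ceil_mul_eq_iff_mem_cell hN).2 (xj_mem_cell hN j), xj_sub_xj_sub_one, dq,
    div_mul_cancel₀ _ hN']
  ring

lemma integral_Ioc_eq_sum_cell (hN : 0 < N) {g : ℝ → ℝ}
    (hg : ∀ j, IntegrableOn g (cell N j)) :
    ∫ x in Ioc 0 1, g x = ∑ j ∈ Finset.Icc (1 : ℤ) N, ∫ x in cell N j, g x := by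
  rw [← biUnion_cell hN]
  exact integral_biUnion_finset _ (fun _ _ => measurableSet_Ioc)
    (fun _ _ _ _ hij => pairwise_disjoint_cell hN hij) fun j _ => hg j

lemma integrableOn_Ioc_of_cell (hN : 0 < N) {g : ℝ → ℝ}
    (hg : ∀ j, IntegrableOn g (cell N j)) : IntegrableOn g (Ioc 0 1) := by
  rw [← biUnion_cell hN]
  exact integrableOn_finset_iUnion.2 fun j _ => hg j

lemma integrableOn_cell_abs_slopeFn_sub (hN : 0 < N) (w : ℤ → ℝ) {a : ℝ → ℝ}
    (ha : Continuous a) (j : ℤ) : IntegrableOn (fun x => |slopeFn N w x - a x|) (cell N j) :=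
  (continuous_const.sub ha).abs.integrableOn_Ioc.congr_fun (f := fun x => |dq N w j - a x|)
    (fun x hx => by rw [slopeFn_eq_of_mem_cell hN w hx]) measurableSet_Ioc

lemma two_mul_lq_le_integral_cell (hN : 0 < N) (w : ℤ → ℝ) {a : ℝ → ℝ} (ha : Continuous a)
    (j : ℤ) : 2 * lq N w j ≤ ∫ x in cell N j, (√(1 + a x ^ 2) + |slopeFn N w x - a x|) := by
  have hvol : volume.real (cell N j) = 1 / N := by
    rw [cell, Real.volume_real_Ioc_of_le (xj_mem_cell hN j).1.le, xj_sub_xj_sub_one]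
  calc 2 * lq N w j = ∫ _ in cell N j, √(1 + dq N w j ^ 2) := by
        rw [setIntegral_const, hvol, smul_eq_mul, lq]
        ring
    _ ≤ _ := by
      refine setIntegral_mono_on (integrableOn_const measure_Ioc_lt_top.ne)
        ((by fun_prop : Continuous fun x => √(1 + a x ^ 2)).integrableOn_Ioc.add
          (integrableOn_cell_abs_slopeFn_sub hN w ha j)) measurableSet_Ioc fun x hx => ?_
      rw [slopeFn_eq_of_mem_cell hN w hx]
      exact sqrt_one_add_sq_le _ _

end Mesh

section Adhesion

variable {γ δ : ℝ} {ζ ψ : ℝ → ℝ} {N : ℕ} {w : ℤ → ℝ}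

lemma Ah_nonneg (hγ : 0 ≤ γ) (hζ : IsRegularizer ζ) : 0 ≤ Ah γ ζ δ ψ N w :=
  mul_nonneg hγ <| Finset.sum_nonneg fun j _ =>
    mul_nonneg (mul_nonneg (hζ.nonneg _) (hζ.nonneg _)) (by rw [lq]; positivity)

lemma adhesion_term_le_integral_cell (hζ : IsRegularizer ζ) (hδ : 0 < δ) (hN : 0 < N)
    {a : ℝ → ℝ} (ha : Continuous a) {K : Set ℝ} {j : ℤ}
    (hK : |w j - ψ (xj N j)| ≤ δ → cell N j ⊆ K) :
    ζ ((w (j - 1) - ψ (xj N (j - 1))) / δ) * ζ ((w j - ψ (xj N j)) / δ) * (2 * lq N w j) ≤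
      ∫ x in cell N j, (K.indicator (fun y => √(1 + a y ^ 2)) x + |slopeFn N w x - a x|) := by
  by_cases hclose : |w j - ψ (xj N j)| ≤ δ
  · calc _ ≤ 2 * lq N w j :=
          mul_le_of_le_one_left (by rw [lq]; positivity)
            (mul_le_one₀ (hζ.le_one _) (hζ.nonneg _) (hζ.le_one _))
      _ ≤ ∫ x in cell N j, (√(1 + a x ^ 2) + |slopeFn N w x - a x|) :=
          two_mul_lq_le_integral_cell hN w ha j
      _ = _ := setIntegral_congr_fun measurableSet_Ioc fun x hx => by
          rw [indicator_of_mem (hK hclose hx)]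
  · rw [hζ.eq_zero_of_one_lt_abs (t := (w j - ψ (xj N j)) / δ), mul_zero, zero_mul]
    · exact setIntegral_nonneg measurableSet_Ioc fun x _ =>
        add_nonneg (indicator_nonneg (fun _ _ => Real.sqrt_nonneg _) _) (abs_nonneg _)
    · rw [abs_div, abs_of_pos hδ, one_lt_div hδ]
      exact not_le.1 hclose

lemma Ah_le_integral (hγ : 0 ≤ γ) (hζ : IsRegularizer ζ) (hδ : 0 < δ) (hN : 0 < N)
    {a : ℝ → ℝ} (ha : Continuous a) {K : Set ℝ} (hKm : MeasurableSet K)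
    (hK : ∀ j ∈ Finset.Icc (1 : ℤ) N, |w j - ψ (xj N j)| ≤ δ → cell N j ⊆ K) :
    Ah γ ζ δ ψ N w ≤ γ * ((∫ x in Ioc 0 1 ∩ K, √(1 + a x ^ 2)) +
      ∫ x in Ioc 0 1, |slopeFn N w x - a x|) := by
  have hf : ∀ j, IntegrableOn (K.indicator fun y => √(1 + a y ^ 2)) (cell N j) := fun _ =>
    (by fun_prop : Continuous fun x => √(1 + a x ^ 2)).integrableOn_Ioc.indicator hKm
  have hsum := integral_Ioc_eq_sum_cell hN
    (g := fun x => K.indicator (fun y => √(1 + a y ^ 2)) x + |slopeFn N w x - a x|) fun j =>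
    (hf j).add (integrableOn_cell_abs_slopeFn_sub hN w ha j)
  rw [integral_add (integrableOn_Ioc_of_cell hN hf)
    (integrableOn_Ioc_of_cell hN (integrableOn_cell_abs_slopeFn_sub hN w ha)),
    setIntegral_indicator hKm] at hsum
  rw [Ah, hsum]
  gcongr with j hj
  exact adhesion_term_le_integral_cell hζ hδ hN ha (hK j hj)

end Adhesion

lemma tendsto_setIntegral_sublevel {X : Type*} [MeasurableSpace X] {μ : Measure X} {S : Set X}
    (hS : MeasurableSet S) {v ψ f : X → ℝ} (hv : Measurable v) (hψ : Measurable ψ)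
    (hvψ : ∀ x ∈ S, ψ x ≤ v x) (hf : IntegrableOn f S μ) :
    Tendsto (fun m : ℕ => ∫ x in S ∩ {x | v x - ψ x ≤ 1 / (m + 1)}, f x ∂μ) atTop
      (𝓝 (∫ x in {x | x ∈ S ∧ v x = ψ x}, f x ∂μ)) := by
  have hlim := tendsto_setIntegral_of_antitone (μ := μ) (f := f)
    (s := fun m : ℕ => S ∩ {x | v x - ψ x ≤ 1 / (m + 1)})
    (fun _ => hS.inter (measurableSet_le (hv.sub hψ) measurable_const))
    (fun m m' hmm' => inter_subset_inter_right _ fun x (hx : v x - ψ x ≤ 1 / (m' + 1)) =>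
      hx.trans (Nat.one_div_le_one_div hmm'))
    ⟨0, hf.mono_set inter_subset_left⟩
  convert hlim using 4
  ext x
  simp only [mem_ofPred_eq, mem_iInter, mem_inter_iff]
  refine ⟨fun ⟨hx, hvx⟩ m => ⟨hx, by rw [hvx, sub_self]; exact Nat.one_div_pos_of_nat.le⟩,
    fun h => ⟨(h 0).1, le_antisymm ?_ (hvψ x (h 0).1)⟩⟩
  exact sub_nonpos.1 (ge_of_tendsto' tendsto_one_div_add_atTop_nhds_zero_nat fun m => (h m).2)

lemma eventually_cell_subset_sublevel {ψ v : ℝ → ℝ} (hψ : Continuous ψ) (hv : Continuous v)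
    {Nn : ℕ → ℕ} (hNn : Tendsto Nn atTop atTop) {δn : ℕ → ℝ} (hδ : Tendsto δn atTop (𝓝 0))
    {vn : ℕ → ℤ → ℝ}
    (hunif : TendstoUniformlyOn (fun n x => interp (Nn n) (vn n) x) v atTop (Icc 0 1))
    {η : ℝ} (hη : 0 < η) :
    ∀ᶠ n in atTop, ∀ j ∈ Finset.Icc (1 : ℤ) (Nn n), |vn n j - ψ (xj (Nn n) j)| ≤ δn n →
      cell (Nn n) j ⊆ {x | v x - ψ x ≤ η} := by
  obtain ⟨ρ, hρ, hUC⟩ := Metric.uniformContinuousOn_iff.1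
    (isCompact_Icc.uniformContinuousOn_of_continuous (hv.sub hψ).continuousOn) (η / 3)
    (by positivity)
  filter_upwards [hNn.eventually_gt_atTop 0,
    hδ.eventually_lt_const (show (0 : ℝ) < η / 3 by positivity),
    (tendsto_one_div_atTop_nhds_zero_nat.comp hNn).eventually_lt_const hρ,
    Metric.tendstoUniformlyOn_iff.1 hunif (η / 3) (by positivity)]
    with n hN hδn hmesh hclose j hj hjδ x hx
  have hxj := xj_mem_cell hN j
  have hdist : dist x (xj (Nn n) j) < ρ := by
    rw [Real.dist_eq, abs_of_nonpos (by linarith [hx.2])]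
    linarith [hx.1, xj_sub_xj_sub_one (Nn n) j, show (1 : ℝ) / Nn n < ρ from hmesh]
  have hvψ := hUC x (cell_subset_Icc hN hj hx) _ (cell_subset_Icc hN hj hxj) hdist
  have hvvn := hclose _ (cell_subset_Icc hN hj hxj)
  rw [Real.dist_eq, Pi.sub_apply, Pi.sub_apply] at hvψ
  rw [interp_xj hN, Real.dist_eq] at hvvn
  show v x - ψ x ≤ η
  linarith [(abs_lt.1 hvψ).2, (abs_lt.1 hvvn).2, (abs_le.1 hjδ).2]

lemma limsup_Ah_le_sublevel {ψ v : ℝ → ℝ} (hψ : Continuous ψ) (hv : ContDiff ℝ 1 v)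
    {γ : ℝ} (hγ : 0 ≤ γ) {ζ : ℝ → ℝ} (hζ : IsRegularizer ζ)
    {Nn : ℕ → ℕ} (hNn : Tendsto Nn atTop atTop)
    {δn : ℕ → ℝ} (hδpos : ∀ n, 0 < δn n) (hδ : Tendsto δn atTop (𝓝 0)) {vn : ℕ → ℤ → ℝ}
    (hunif : TendstoUniformlyOn (fun n x => interp (Nn n) (vn n) x) v atTop (Icc 0 1))
    (hslope : Tendsto
      (fun n => ∫ x in Ioo 0 1, |slopeFn (Nn n) (vn n) x - deriv v x|) atTop (𝓝 0))
    {η : ℝ} (hη : 0 < η) :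
    limsup (fun n => Ah γ ζ (δn n) ψ (Nn n) (vn n)) atTop ≤
      γ * ∫ x in Ioc 0 1 ∩ {x | v x - ψ x ≤ η}, √(1 + deriv v x ^ 2) := by
  set I := ∫ x in Ioc 0 1 ∩ {x | v x - ψ x ≤ η}, √(1 + deriv v x ^ 2)
  set bound := fun n => γ * (I + ∫ x in Ioo 0 1, |slopeFn (Nn n) (vn n) x - deriv v x|)
  have hle : ∀ᶠ n in atTop, Ah γ ζ (δn n) ψ (Nn n) (vn n) ≤ bound n := by
    filter_upwards [hNn.eventually_gt_atTop 0,
      eventually_cell_subset_sublevel hψ hv.continuous hNn hδ hunif hη] with n hN hK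
    simp only [bound]
    rw [← integral_Ioc_eq_integral_Ioo]
    exact Ah_le_integral (K := {x | v x - ψ x ≤ η}) hγ hζ (hδpos n) hN
      (hv.continuous_deriv le_rfl)
      (measurableSet_le (hv.continuous.measurable.sub hψ.measurable) measurable_const) hK
  have hlim : Tendsto bound atTop (𝓝 (γ * I)) := by
    simpa using (hslope.const_add I).const_mul γ
  calc limsup (fun n => Ah γ ζ (δn n) ψ (Nn n) (vn n)) atTop ≤ limsup bound atTop :=
        limsup_le_limsup hle (isCoboundedUnder_le_of_le atTop fun _ => Ah_nonneg hγ hζ)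
          hlim.isBoundedUnder_le
    _ = γ * I := hlim.limsup_eq

theorem stmt5_general (ψ : ℝ → ℝ) (hψ : Continuous ψ)
    (v : ℝ → ℝ) (hv : ContDiff ℝ 1 v)
    (hvψ : ∀ x, ψ x ≤ v x)
    (γ : ℝ) (hγ : 0 < γ) (ζ : ℝ → ℝ) (hζ : IsRegularizer ζ)
    (Nn : ℕ → ℕ) (hNn : Tendsto Nn atTop atTop)
    (δn : ℕ → ℝ) (hδpos : ∀ n, 0 < δn n) (hδ : Tendsto δn atTop (nhds 0))
    (vn : ℕ → ℤ → ℝ)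
    (hunif : TendstoUniformlyOn (fun n x => interp (Nn n) (vn n) x) v atTop
      (Set.Icc (0 : ℝ) 1))
    (hslope : Tendsto
      (fun n => ∫ x in Set.Ioo (0 : ℝ) 1, |slopeFn (Nn n) (vn n) x - deriv v x|) atTop
      (nhds 0)) :
    limsup (fun n => Ah γ ζ (δn n) ψ (Nn n) (vn n)) atTop ≤
      γ * ∫ x in {x | x ∈ Set.Ioo (0 : ℝ) 1 ∧ v x = ψ x},
        Real.sqrt (1 + deriv v x ^ 2) := by
  have hcontact := tendsto_setIntegral_sublevel (measurableSet_Ioc (a := (0 : ℝ)) (b := 1))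
    hv.continuous.measurable hψ.measurable (fun x _ => hvψ x)
    (by fun_prop : Continuous fun x => √(1 + deriv v x ^ 2)).integrableOn_Ioc (μ := volume)
  have hIoo : ∫ x in {x | x ∈ Ioo (0 : ℝ) 1 ∧ v x = ψ x}, √(1 + deriv v x ^ 2) =
      ∫ x in {x | x ∈ Ioc (0 : ℝ) 1 ∧ v x = ψ x}, √(1 + deriv v x ^ 2) :=
    setIntegral_congr_set (Ioo_ae_eq_Ioc.inter EventuallyEq.rfl)
  rw [hIoo]
  exact ge_of_tendsto' (hcontact.const_mul γ) fun m =>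
    limsup_Ah_le_sublevel hψ hv hγ.le hζ hNn hδpos hδ hunif hslope Nat.one_div_pos_of_nat

/-- Upper semicontinuity of the discrete adhesion energy. -/
theorem stmt5 (ψ : ℝ → ℝ) (hψ : Continuous ψ) (hψper : ∀ x, ψ (x + 1) = ψ x)
    (v : ℝ → ℝ) (hv : ContDiff ℝ 1 v) (hvper : ∀ x, v (x + 1) = v x)
    (hvψ : ∀ x, ψ x ≤ v x)
    (γ : ℝ) (hγ : 0 < γ) (ζ : ℝ → ℝ) (hζ : IsRegularizer ζ)
    (Nn : ℕ → ℕ) (hNn : Tendsto Nn atTop atTop)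
    (δn : ℕ → ℝ) (hδpos : ∀ n, 0 < δn n) (hδ : Tendsto δn atTop (nhds 0))
    (vn : ℕ → ℤ → ℝ) (hvnper : ∀ n j, vn n (j + Nn n) = vn n j)
    (hunif : TendstoUniformlyOn (fun n x => interp (Nn n) (vn n) x) v atTop
      (Set.Icc (0 : ℝ) 1))
    (hslope : Tendsto
      (fun n => ∫ x in Set.Ioo (0 : ℝ) 1, |slopeFn (Nn n) (vn n) x - deriv v x|) atTop
      (nhds 0)) :
    limsup (fun n => Ah γ ζ (δn n) ψ (Nn n) (vn n)) atTop ≤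
      γ * ∫ x in {x | x ∈ Set.Ioo (0 : ℝ) 1 ∧ v x = ψ x},
        Real.sqrt (1 + deriv v x ^ 2) :=
  stmt5_general ψ hψ v hv hvψ γ hγ ζ hζ Nn hNn δn hδpos hδ vn hunif hslope

end
end

section
/- Blow-up of the penalty term for inadmissible limits: Let ψ, v : ℝ → ℝ be continuous and 1-periodic, and assume there exists x₀ ∈ [0,1] with v(x₀) < ψ(x₀). Let Nₙ → ∞ be integers, hₙ = 1/Nₙ, x_j = j·hₙ, let ρₙ > 0 with ρₙ → 0, and let vₙ : ℝ → ℝ be continuous functions with sup_{x∈[0,1]} |vₙ(x) − v(x)| → 0. Then (1/ρₙ) · Σ_{j=1}^{Nₙ} (max(ψ(x_j) − vₙ(x_j), 0))² · hₙ → +∞ as n → ∞. -/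
/-!
On a nondegenerate interval `[a, b] ⊆ (0, 1]` we have `ψ - v ≥ c > 0`, hence `ψ - vₙ ≥ c / 2`
there for large `n` by uniform convergence. About `N (b - a) - 1` grid points `j / N` lie in
`[a, b]`, so the discrete penalty sum is bounded below by `(c / 2)² (b - a) / 2` once
`1 / N ≤ (b - a) / 2`, and dividing by `ρₙ → 0⁺` makes it blow up.
-/

open Filter Set Topology

lemma exists_Icc_lower_bound_of_pos {g : ℝ → ℝ} (hg : Continuous g) {x₀ : ℝ}
    (hx₀ : x₀ ∈ Icc (0 : ℝ) 1) (hpos : 0 < g x₀) :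
    ∃ a b c : ℝ, 0 < a ∧ a < b ∧ b ≤ 1 ∧ 0 < c ∧ ∀ x ∈ Icc a b, c ≤ g x := by
  set c := g x₀ / 2
  have hU : IsOpen ({x | c < g x} ∩ Ioo 0 1) := (isOpen_lt continuous_const hg).inter isOpen_Ioo
  -- `x₀` may be an endpoint, but it lies in the closure of `(0, 1)`
  obtain ⟨y, hy⟩ : ({x | c < g x} ∩ Ioo 0 1).Nonempty := by
    refine mem_closure_iff_nhds.mp (by rwa [closure_Ioo zero_ne_one]) _ ?_
    exact (isOpen_lt continuous_const hg).mem_nhds (half_lt_self hpos)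
  obtain ⟨ε, hε, hball⟩ := Metric.isOpen_iff.mp hU y hy
  have hIcc : Icc (y - ε / 2) (y + ε / 2) ⊆ {x | c < g x} ∩ Ioo 0 1 := fun x hx =>
    hball (by rw [Real.ball_eq_Ioo]; exact ⟨by linarith [hx.1], by linarith [hx.2]⟩)
  have hmem : ∀ x ∈ Icc (y - ε / 2) (y + ε / 2), x ∈ Ioo (0 : ℝ) 1 := fun x hx => (hIcc hx).2
  refine ⟨y - ε / 2, y + ε / 2, c, (hmem _ ⟨le_rfl, by linarith⟩).1, by linarith,
    (hmem _ ⟨by linarith, le_rfl⟩).2.le, by positivity, fun x hx => (hIcc hx).1.le⟩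

lemma sub_sub_one_le_card_Icc_ceil_floor (s t : ℝ) :
    t - s - 1 ≤ ((Finset.Icc ⌈s⌉ ⌊t⌋).card : ℝ) := by
  have hcard : ((⌊t⌋ + 1 - ⌈s⌉ : ℤ) : ℝ) ≤ ((Finset.Icc ⌈s⌉ ⌊t⌋).card : ℝ) := by
    rw [Int.card_Icc]
    exact_mod_cast Int.self_le_toNat _
  push_cast at hcard
  linarith [Int.sub_one_lt_floor t, Int.ceil_lt_add_one s]

lemma mul_sub_le_sum_grid {F : ℝ → ℝ} (hF : ∀ x, 0 ≤ F x) {a b m : ℝ} (ha : 0 < a) (hb : b ≤ 1)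
    (hm : 0 ≤ m) (hFm : ∀ x ∈ Icc a b, m ≤ F x) {N : ℕ} (hN : 0 < N) :
    m * (b - a - 1 / N) ≤ ∑ j ∈ Finset.Icc (1 : ℤ) N, F ((j : ℝ) / N) * (1 / N) := by
  have hNR : (0 : ℝ) < N := Nat.cast_pos.mpr hN
  have hsub : Finset.Icc ⌈N * a⌉ ⌊N * b⌋ ⊆ Finset.Icc (1 : ℤ) N := by
    refine Finset.Icc_subset_Icc (Int.ceil_pos.mpr (by positivity)) ?_
    exact_mod_cast (Int.floor_le _).trans (mul_le_of_le_one_right hNR.le hb)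
  have hterm : ∀ j ∈ Finset.Icc ⌈N * a⌉ ⌊N * b⌋, m * (1 / N) ≤ F ((j : ℝ) / N) * (1 / N) := by
    intro j hj
    obtain ⟨hja, hjb⟩ := Finset.mem_Icc.mp hj
    rw [Int.ceil_le] at hja
    rw [Int.le_floor] at hjb
    refine mul_le_mul_of_nonneg_right (hFm _ ⟨?_, ?_⟩) (by positivity)
    · rw [le_div_iff₀ hNR]; linarith
    · rw [div_le_iff₀ hNR]; linarith
  calc m * (b - a - 1 / N) = (N * b - N * a - 1) * (m * (1 / N)) := by field_simp
    _ ≤ (Finset.Icc ⌈N * a⌉ ⌊N * b⌋).card * (m * (1 / N)) :=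
        mul_le_mul_of_nonneg_right (sub_sub_one_le_card_Icc_ceil_floor _ _) (by positivity)
    _ ≤ ∑ j ∈ Finset.Icc ⌈N * a⌉ ⌊N * b⌋, F ((j : ℝ) / N) * (1 / N) := by
        simpa only [nsmul_eq_mul] using Finset.card_nsmul_le_sum _ _ _ hterm
    _ ≤ ∑ j ∈ Finset.Icc (1 : ℤ) N, F ((j : ℝ) / N) * (1 / N) :=
        Finset.sum_le_sum_of_subset_of_nonneg hsub fun j _ _ =>
          mul_nonneg (hF _) (by positivity)

lemma tendsto_one_div_mul_atTop_of_eventually_le {ι : Type*} {l : Filter ι} {ρ s : ι → ℝ}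
    {K : ℝ} (hK : 0 < K) (hρ : Tendsto ρ l (𝓝[>] 0)) (hs : ∀ᶠ i in l, K ≤ s i) :
    Tendsto (fun i => 1 / ρ i * s i) l atTop := by
  refine tendsto_atTop_mono' l ?_ (hρ.inv_tendsto_nhdsGT_zero.atTop_mul_const hK)
  filter_upwards [hs, hρ self_mem_nhdsWithin] with i hi hρi
  rw [one_div]
  exact mul_le_mul_of_nonneg_left hi (inv_nonneg.mpr (le_of_lt hρi))

theorem stmt7_general (ψ v : ℝ → ℝ) (hψ : Continuous ψ)
    (hv : Continuous v)
    (x₀ : ℝ) (hx₀ : x₀ ∈ Set.Icc (0 : ℝ) 1) (hlt : v x₀ < ψ x₀)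
    (Nn : ℕ → ℕ) (hNn : Tendsto Nn atTop atTop)
    (ρn : ℕ → ℝ) (hρpos : ∀ n, 0 < ρn n) (hρ : Tendsto ρn atTop (nhds 0))
    (vn : ℕ → ℝ → ℝ)
    (hunif : TendstoUniformlyOn vn v atTop (Set.Icc (0 : ℝ) 1)) :
    Tendsto (fun n => 1 / ρn n *
        ∑ j ∈ Finset.Icc (1 : ℤ) (Nn n : ℤ),
          max (ψ ((j : ℝ) / Nn n) - vn n ((j : ℝ) / Nn n)) 0 ^ 2 * ((1 : ℝ) / Nn n))
      atTop atTop := by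
  obtain ⟨a, b, c, ha, hab, hb, hc, hgap⟩ :=
    exists_Icc_lower_bound_of_pos (g := fun x => ψ x - v x) (hψ.sub hv) hx₀ (sub_pos.mpr hlt)
  have hclose : ∀ᶠ n in atTop, ∀ x ∈ Icc (0 : ℝ) 1, dist (v x) (vn n x) < c / 2 :=
    Metric.tendstoUniformlyOn_iff.mp hunif _ (by positivity)
  have hfine : ∀ᶠ n in atTop, 2 / (b - a) ≤ (Nn n : ℝ) :=
    (tendsto_natCast_atTop_atTop.comp hNn).eventually_ge_atTop _
  refine tendsto_one_div_mul_atTop_of_eventually_le (K := (c / 2) ^ 2 * ((b - a) / 2))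
    (mul_pos (by positivity) (by linarith)) (tendsto_nhdsWithin_iff.mpr ⟨hρ, .of_forall hρpos⟩) ?_
  filter_upwards [hclose, hfine] with n hn hN
  have hNpos : (0 : ℝ) < Nn n := lt_of_lt_of_le (div_pos two_pos (sub_pos.mpr hab)) hN
  have hmesh : 1 / (Nn n : ℝ) ≤ (b - a) / 2 := by
    rw [div_le_iff₀ hNpos]; rw [div_le_iff₀ (sub_pos.mpr hab)] at hN; linarith
  have hpen : ∀ x ∈ Icc a b, (c / 2) ^ 2 ≤ max (ψ x - vn n x) 0 ^ 2 := fun x hx => by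
    have hdist := hn x ⟨ha.le.trans hx.1, hx.2.trans hb⟩
    rw [Real.dist_eq, abs_lt] at hdist
    exact pow_le_pow_left₀ (by positivity)
      (le_max_of_le_left (by linarith [hgap x hx])) 2
  calc (c / 2) ^ 2 * ((b - a) / 2) ≤ (c / 2) ^ 2 * (b - a - 1 / Nn n) := by gcongr; linarith
    _ ≤ _ := mul_sub_le_sum_grid (fun _ => sq_nonneg _) ha hb (sq_nonneg _) hpen
        (Nat.cast_pos.mp hNpos)

/-- Blow-up of the penalty term for inadmissible limits. -/
theorem stmt7 (ψ v : ℝ → ℝ) (hψ : Continuous ψ) (hψper : ∀ x, ψ (x + 1) = ψ x)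
    (hv : Continuous v) (hvper : ∀ x, v (x + 1) = v x)
    (x₀ : ℝ) (hx₀ : x₀ ∈ Set.Icc (0 : ℝ) 1) (hlt : v x₀ < ψ x₀)
    (Nn : ℕ → ℕ) (hNn : Tendsto Nn atTop atTop)
    (ρn : ℕ → ℝ) (hρpos : ∀ n, 0 < ρn n) (hρ : Tendsto ρn atTop (nhds 0))
    (vn : ℕ → ℝ → ℝ) (hvnc : ∀ n, Continuous (vn n))
    (hunif : TendstoUniformlyOn vn v atTop (Set.Icc (0 : ℝ) 1)) :
    Tendsto (fun n => 1 / ρn n *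
        ∑ j ∈ Finset.Icc (1 : ℤ) (Nn n : ℤ),
          max (ψ ((j : ℝ) / Nn n) - vn n ((j : ℝ) / Nn n)) 0 ^ 2 * ((1 : ℝ) / Nn n))
      atTop atTop :=
  stmt7_general ψ v hψ hv x₀ hx₀ hlt Nn hNn ρn hρpos hρ vn hunif
end

section
/- Consistency of the auxiliary discrete bending energy: Let v : ℝ → ℝ be twice continuously differentiable and 1-periodic. For an integer N ≥ 1 let h = 1/N, x_j = j·h, d_{h,j}v = (v(x_j) − v(x_{j−1}))/h and D_{h,j}v = (v(x_{j+1}) − 2v(x_j) + v(x_{j−1}))/h². Then Σ_{j=1}^N (D_{h,j}v)²/(1 + (d_{h,j}v)²)^{5/2} · h → ∫₀¹ v''(x)²/(1 + v'(x)²)^{5/2} dx as N → ∞. -/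
/-!
By the mean value theorem, `d_{h,j} v = v'(ξ)` and `D_{h,j} v = v''(η)` for some
`ξ ∈ (x_{j-1}, x_j)` and `η ∈ (x_{j-1}, x_{j+1})`. The discrete energy is therefore a Riemann sum of the continuous function
`(s, t) ↦ v''(s)² / (1 + v'(t)²)^(5/2)`, tagged at `(η, ξ)` instead of on the diagonal, and uniform
continuity of that function on a compact square makes it converge like an ordinary Riemann sum.
-/

open MeasureTheory Filter Set Finset

theorem Int.sum_Icc_one_eq_sum_range {M : Type*} [AddCommMonoid M] (N : ℕ) (F : ℤ → M) :
    ∑ j ∈ Finset.Icc (1 : ℤ) N, F j = ∑ i ∈ Finset.range N, F (i + 1) := by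
  rw [Int.Icc_eq_finset_map, sum_map]
  simp [add_comm]

noncomputable def backwardDiff (v : ℝ → ℝ) (h b : ℝ) : ℝ := (v b - v (b - h)) / h

noncomputable def secondDiff (v : ℝ → ℝ) (h b : ℝ) : ℝ := (v (b + h) - 2 * v b + v (b - h)) / h ^ 2

theorem exists_deriv_eq_backwardDiff {v : ℝ → ℝ} (hv : Differentiable ℝ v) {h : ℝ} (hh : 0 < h)
    (b : ℝ) : ∃ ξ ∈ Ioo (b - h) b, deriv v ξ = backwardDiff v h b := by
  obtain ⟨ξ, hξ, hξeq⟩ := exists_deriv_eq_slope v (sub_lt_self b hh) hv.continuous.continuousOn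
    hv.differentiableOn
  exact ⟨ξ, hξ, by rw [hξeq, sub_sub_cancel, backwardDiff]⟩

/-- The mean value theorem applied first to `t ↦ v (t + h) - v t` on `[b - h, b]`, then to `v'`. -/
theorem exists_deriv_deriv_eq_secondDiff {v : ℝ → ℝ} (hv : Differentiable ℝ v)
    (hv' : Differentiable ℝ (deriv v)) {h : ℝ} (hh : 0 < h) (b : ℝ) :
    ∃ η ∈ Ioo (b - h) (b + h), deriv (deriv v) η = secondDiff v h b := by
  have hφ : Differentiable ℝ fun t => v (t + h) - v t := by fun_prop
  obtain ⟨ξ, hξ, hξeq⟩ := exists_deriv_eq_slope (fun t => v (t + h) - v t)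
    (sub_lt_self b hh) hφ.continuous.continuousOn hφ.differentiableOn
  obtain ⟨η, hη, hηeq⟩ := exists_deriv_eq_slope (deriv v) (lt_add_of_pos_right ξ hh)
    hv'.continuous.continuousOn hv'.differentiableOn
  refine ⟨η, ⟨by linarith [hξ.1, hη.1], by linarith [hξ.2, hη.2]⟩, ?_⟩
  rw [deriv_fun_sub (by fun_prop) (by fun_prop), deriv_comp_add_const] at hξeq
  rw [hηeq, add_sub_cancel_left, hξeq, sub_sub_cancel, sub_add_cancel, secondDiff]
  field_simp
  ring

theorem abs_sum_div_sub_integral_le {g : ℝ → ℝ} (hg : IntervalIntegrable g volume 0 1)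
    {N : ℕ} (hN : 0 < N) (c : ℕ → ℝ) {r : ℝ}
    (hc : ∀ j < N, ∀ x ∈ Icc ((j : ℝ) / N) ((j + 1) / N), |c j - g x| ≤ r) :
    |∑ j ∈ range N, c j / N - ∫ x in (0 : ℝ)..1, g x| ≤ r := by
  have hN' : (0 : ℝ) < N := by exact_mod_cast hN
  have hcell_le : ∀ j : ℕ, (j : ℝ) / N ≤ (j + 1) / N := fun j => by gcongr; linarith
  have hgcell : ∀ j < N, IntervalIntegrable g volume ((j : ℝ) / N) ((j + 1) / N) := by
    intro j hj
    refine hg.mono_set (uIcc_subset_uIcc ?_ ?_) <;> rw [Set.uIcc_of_le zero_le_one] <;>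
      refine ⟨by positivity, (div_le_one hN').2 ?_⟩
    · linarith [show (j : ℝ) + 1 ≤ N by exact_mod_cast hj]
    · exact_mod_cast hj
  have hsplit :
      ∫ x in (0 : ℝ)..1, g x = ∑ j ∈ range N, ∫ x in ((j : ℝ) / N)..((j + 1) / N), g x := by
    have := intervalIntegral.sum_integral_adjacent_intervals (a := fun k : ℕ => (k : ℝ) / N)
      (μ := volume) (fun k hk => by simpa using hgcell k hk)
    simpa [div_self hN'.ne'] using this.symm
  have hcell : ∀ j < N, |c j / N - ∫ x in ((j : ℝ) / N)..((j + 1) / N), g x| ≤ r / N := by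
    intro j hj
    have hconst : c j / N = ∫ _ in ((j : ℝ) / N)..((j + 1) / N), c j := by
      rw [intervalIntegral.integral_const, smul_eq_mul]; ring
    rw [hconst, ← intervalIntegral.integral_sub intervalIntegrable_const (hgcell j hj)]
    have := intervalIntegral.norm_integral_le_of_norm_le_const (C := r)
      (f := fun x => c j - g x) fun x hx => by
        rw [uIoc_of_le (hcell_le j)] at hx
        exact hc j hj x (Ioc_subset_Icc_self hx)
    rwa [abs_of_nonneg (sub_nonneg.2 (hcell_le j)), show ((j : ℝ) + 1) / N - j / N = 1 / N by ring,
      mul_one_div] at this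
  calc |∑ j ∈ range N, c j / N - ∫ x in (0 : ℝ)..1, g x|
      = |∑ j ∈ range N, (c j / N - ∫ x in ((j : ℝ) / N)..((j + 1) / N), g x)| := by
        rw [hsplit, sum_sub_distrib]
    _ ≤ ∑ j ∈ range N, |c j / N - ∫ x in ((j : ℝ) / N)..((j + 1) / N), g x| :=
        abs_sum_le_sum_abs _ _
    _ ≤ ∑ _j ∈ range N, r / N := sum_le_sum fun j hj => hcell j (mem_range.1 hj)
    _ = r := by rw [sum_const, card_range, nsmul_eq_mul]; field_simp

/-- Riemann sums whose two tags, one for each argument of `G`, may lie up to one cell to the right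
of the current cell. -/
theorem tendsto_sum_div_integral_of_mem_tags {G : ℝ × ℝ → ℝ} (hG : Continuous G)
    (c : ℕ → ℕ → ℝ) (hc : ∀ N : ℕ, ∀ j < N, ∃ p ∈ Icc ((j : ℝ) / N) ((j + 2) / N) ×ˢ
      Icc ((j : ℝ) / N) ((j + 2) / N), c N j = G p) :
    Tendsto (fun N : ℕ => ∑ j ∈ range N, c N j / N) atTop (nhds (∫ x in (0 : ℝ)..1, G (x, x))) := by
  have hK : IsCompact (Icc (0 : ℝ) 2 ×ˢ Icc (0 : ℝ) 2) := isCompact_Icc.prod isCompact_Icc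
  have hUC := Metric.uniformContinuousOn_iff_le.1
    (hK.uniformContinuousOn_of_continuous hG.continuousOn)
  have hdiag : Continuous fun x : ℝ => G (x, x) := hG.comp (continuous_id.prodMk continuous_id)
  rw [Metric.tendsto_atTop]
  intro ε hε
  obtain ⟨δ, hδ, hGδ⟩ := hUC (ε / 2) (half_pos hε)
  obtain ⟨N₀, hN₀⟩ := exists_nat_gt (2 / δ)
  refine ⟨N₀ + 1, fun N hN => ?_⟩
  have hNpos : 0 < N := by omega
  have hN' : (0 : ℝ) < N := by exact_mod_cast hNpos
  have hmesh : 2 * (1 / (N : ℝ)) ≤ δ := by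
    rw [← mul_div_assoc, mul_one, div_le_iff₀ hN']
    rw [div_lt_iff₀ hδ] at hN₀
    nlinarith [show (N₀ : ℝ) + 1 ≤ N by exact_mod_cast hN]
  rw [Real.dist_eq]
  refine (abs_sum_div_sub_integral_le (hdiag.intervalIntegrable 0 1) hNpos _
    fun j hj x hx => ?_).trans_lt (half_lt_self hε)
  obtain ⟨⟨s, t⟩, ⟨hs, ht⟩, hcp⟩ := hc N j hj
  have hj0 : (0 : ℝ) ≤ j / N := by positivity
  have hjN : ((j : ℝ) + 2) / N ≤ 2 := by
    rw [div_le_iff₀ hN']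
    linarith [show (j : ℝ) + 1 ≤ N by exact_mod_cast hj, show (1 : ℝ) ≤ N by exact_mod_cast hNpos]
  have hshift1 : ((j : ℝ) + 1) / N = j / N + 1 / N := by ring
  have hshift2 : ((j : ℝ) + 2) / N = j / N + 2 * (1 / N) := by ring
  have h1N : 0 ≤ 1 / (N : ℝ) := by positivity
  have hx' : x ∈ Icc (0 : ℝ) 2 := ⟨hj0.trans hx.1, by linarith [hx.2]⟩
  rw [hcp, ← Real.dist_eq]
  refine hGδ _ ⟨⟨hj0.trans hs.1, hs.2.trans hjN⟩, ⟨hj0.trans ht.1, ht.2.trans hjN⟩⟩ _ ⟨hx', hx'⟩ ?_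
  rw [Prod.dist_eq, Real.dist_eq, Real.dist_eq]
  exact max_le (abs_sub_le_iff.2 ⟨by linarith [hs.2, hx.1], by linarith [hs.1, hx.2]⟩)
    (abs_sub_le_iff.2 ⟨by linarith [ht.2, hx.1], by linarith [ht.1, hx.2]⟩)

theorem tendsto_sum_secondDiff_backwardDiff {Φ : ℝ × ℝ → ℝ} (hΦ : Continuous Φ) {v : ℝ → ℝ}
    (hv : ContDiff ℝ 2 v) :
    Tendsto (fun N : ℕ => ∑ j ∈ range N,
        Φ (secondDiff v (1 / N) ((j + 1) / N), backwardDiff v (1 / N) ((j + 1) / N)) / N)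
      atTop (nhds (∫ x in (0 : ℝ)..1, Φ (deriv (deriv v) x, deriv v x))) := by
  have hv' : ContDiff ℝ 1 (deriv v) := hv.deriv'
  have hd : Differentiable ℝ v := hv.differentiable (by norm_num)
  have hd' : Differentiable ℝ (deriv v) := hv'.differentiable one_ne_zero
  have hG : Continuous fun p : ℝ × ℝ => Φ (deriv (deriv v) p.1, deriv v p.2) :=
    hΦ.comp (((hv'.continuous_deriv le_rfl).comp continuous_fst).prodMk
      (hv'.continuous.comp continuous_snd))
  refine tendsto_sum_div_integral_of_mem_tags hG _ fun N j hj => ?_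
  have hh : (0 : ℝ) < 1 / N := one_div_pos.2 (Nat.cast_pos.2 (j.zero_le.trans_lt hj))
  obtain ⟨ξ, hξ, hξeq⟩ := exists_deriv_eq_backwardDiff hd hh ((j + 1 : ℝ) / N)
  obtain ⟨η, hη, hηeq⟩ := exists_deriv_deriv_eq_secondDiff hd hd' hh ((j + 1 : ℝ) / N)
  have hleft : ((j : ℝ) + 1) / N - 1 / N = j / N := by ring
  have hright : ((j : ℝ) + 1) / N + 1 / N = (j + 2) / N := by ring
  refine ⟨(η, ξ), ⟨?_, ?_⟩, by rw [hηeq, hξeq]⟩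
  · rw [← hleft, ← hright]; exact Ioo_subset_Icc_self hη
  · rw [← hleft, ← hright]; exact ⟨hξ.1.le, hξ.2.le.trans (by linarith)⟩

theorem stmt8_general (v : ℝ → ℝ) (hv : ContDiff ℝ 2 v) :
    Tendsto (fun N : ℕ =>
        ∑ j ∈ Finset.Icc (1 : ℤ) (N : ℤ),
          ((v (((j : ℝ) + 1) / N) - 2 * v ((j : ℝ) / N) + v (((j : ℝ) - 1) / N)) /
              ((1 : ℝ) / N) ^ 2) ^ 2 /
            (1 + ((v ((j : ℝ) / N) - v (((j : ℝ) - 1) / N)) / ((1 : ℝ) / N)) ^ 2) ^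
              ((5 : ℝ) / 2) * ((1 : ℝ) / N))
      atTop
      (nhds (∫ x in Set.Ioo (0 : ℝ) 1,
        deriv (deriv v) x ^ 2 / (1 + deriv v x ^ 2) ^ ((5 : ℝ) / 2))) := by
  have hΦ : Continuous fun p : ℝ × ℝ => p.1 ^ 2 / (1 + p.2 ^ 2) ^ ((5 : ℝ) / 2) :=
    (continuous_fst.pow 2).div
      ((continuous_const.add (continuous_snd.pow 2)).rpow_const fun _ => Or.inr (by norm_num))
      fun p => (Real.rpow_pos_of_pos (by positivity) _).ne'
  rw [← integral_Ioc_eq_integral_Ioo, ← intervalIntegral.integral_of_le zero_le_one]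
  refine (tendsto_sum_secondDiff_backwardDiff hΦ hv).congr fun N => ?_
  rw [Int.sum_Icc_one_eq_sum_range]
  push_cast
  refine sum_congr rfl fun j _ => ?_
  simp only [secondDiff, backwardDiff]
  ring_nf

/-- Consistency of the auxiliary discrete bending energy. -/
theorem stmt8 (v : ℝ → ℝ) (hv : ContDiff ℝ 2 v) (hper : ∀ x, v (x + 1) = v x) :
    Tendsto (fun N : ℕ =>
        ∑ j ∈ Finset.Icc (1 : ℤ) (N : ℤ),
          ((v (((j : ℝ) + 1) / N) - 2 * v ((j : ℝ) / N) + v (((j : ℝ) - 1) / N)) /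
              ((1 : ℝ) / N) ^ 2) ^ 2 /
            (1 + ((v ((j : ℝ) / N) - v (((j : ℝ) - 1) / N)) / ((1 : ℝ) / N)) ^ 2) ^
              ((5 : ℝ) / 2) * ((1 : ℝ) / N))
      atTop
      (nhds (∫ x in Set.Ioo (0 : ℝ) 1,
        deriv (deriv v) x ^ 2 / (1 + deriv v x ^ 2) ^ ((5 : ℝ) / 2))) :=
  stmt8_general v hv
end

section
/- Consistency of the polygonal discrete bending energy: Let v : ℝ → ℝ be twice continuously differentiable and 1-periodic. For an integer N ≥ 1 let h = 1/N, x_j = j·h, and form the discrete curve Π_h v with vertex values v(x_j), with associated quantities d_j = (v(x_j) − v(x_{j−1}))/h, l_j = (h/2)·√(1 + d_j²) and θ_j = arccos[(1 + d_j·d_{j+1})/(√(1 + d_j²)·√(1 + d_{j+1}²))] (indices extended N-periodically). Then Σ_{j=1}^N θ_j²·(l_j³ + l_{j+1}³)/(l_j·l_{j+1}·(l_j + l_{j+1})²) → ∫₀¹ v''(x)²/(1 + v'(x)²)^{5/2} dx as N → ∞; in particular limsup_{N→∞} of the left-hand side is at most the right-hand side. -/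
/-! Since `θ_j = |arctan d_{j+1} - arctan d_j|`, the mean value theorem for `arctan` turns the
`j`-th summand into `h · Φ(d_j, d_{j+1}, c_j, (d_{j+1} - d_j)/h)`, where `Φ = bendingDensity` is
continuous and `c_j` lies between `d_j` and `d_{j+1}`. By the mean value theorems for `v` and `v'`,
the slopes `d_j`, `d_{j+1}`, `c_j` are uniformly close to `v'(x_j)` and `(d_{j+1} - d_j)/h` to
`v''(x_j)`, while `Φ(s, s, s, D) = D² / (1 + s²)^{5/2}`. So the energy differs by `o(1)` from a
Riemann sum of the limit integrand. -/

open Filter MeasureTheory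

noncomputable section

open Set Real Topology

lemma IsCompact.exists_pos_forall_dist_lt {α β : Type*} [PseudoMetricSpace α]
    [PseudoMetricSpace β] {s : Set α} (hs : IsCompact s) {f : α → β}
    (hf : ∀ x ∈ s, ContinuousAt f x) {ε : ℝ} (hε : 0 < ε) :
    ∃ δ > 0, ∀ x ∈ s, ∀ y, dist x y < δ → dist (f x) (f y) < ε := by
  obtain ⟨δ, hδ, hclose⟩ := Metric.mem_uniformity_dist.1
    (hs.uniformContinuousAt_of_continuousAt f hf (Metric.dist_mem_uniformity hε))
  exact ⟨δ, hδ, fun x hx y hxy => hclose hxy hx⟩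

section DifferenceQuotients

variable {f : ℝ → ℝ} {s : Set ℝ}

lemma exists_pos_forall_abs_slope_sub_deriv_lt (hf : ContDiff ℝ 1 f) (hs : IsCompact s)
    {ε : ℝ} (hε : 0 < ε) :
    ∃ δ > 0, ∀ x ∈ s, ∀ a b, a < b → x ∈ Icc a b → b - a < δ →
      |(f b - f a) / (b - a) - deriv f x| < ε := by
  obtain ⟨hdiff, hcont⟩ := contDiff_one_iff_deriv.1 hf
  obtain ⟨δ, hδ, hclose⟩ := hs.exists_pos_forall_dist_lt (fun x _ => hcont.continuousAt) hε
  refine ⟨δ, hδ, fun x hx a b hab hxab hba => ?_⟩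
  obtain ⟨c, hc, hslope⟩ :=
    exists_deriv_eq_slope f hab hdiff.continuous.continuousOn hdiff.differentiableOn
  rw [← hslope, abs_sub_comm, ← Real.dist_eq]
  refine hclose x hx c ?_
  rw [Real.dist_eq, abs_lt]
  constructor <;> linarith [hc.1, hc.2, hxab.1, hxab.2]

/-- Cauchy's mean value theorem for `t ↦ f (x + t) + f (x - t)` against `t ↦ t²`, followed by
the mean value theorem for `f'`. -/
lemma exists_second_difference_eq_deriv_deriv (hf : ContDiff ℝ 2 f) (x : ℝ) {h : ℝ}
    (hh : 0 < h) :
    ∃ η ∈ Ioo (x - h) (x + h), (f (x + h) - 2 * f x + f (x - h)) / h ^ 2 = deriv (deriv f) η := by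
  have hf' : ContDiff ℝ 1 (deriv f) := hf.iterate_deriv' 1 1
  have hdiff : Differentiable ℝ f := hf.differentiable (by norm_num)
  have hdiff' : Differentiable ℝ (deriv f) := hf'.differentiable one_ne_zero
  have hsym : ∀ t, HasDerivAt (fun t => f (x + t) + f (x - t))
      (deriv f (x + t) - deriv f (x - t)) t := fun t =>
    ((hdiff _).hasDerivAt.comp_const_add x t).add ((hdiff _).hasDerivAt.comp_const_sub x t)
  obtain ⟨t, ht, hcauchy⟩ := exists_ratio_hasDerivAt_eq_ratio_slope _ _ hh
    (fun t _ => (hsym t).continuousAt.continuousWithinAt) (fun t _ => hsym t)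
    (fun t => t ^ 2) (fun t => 2 * t) (by fun_prop) (fun t _ => by simpa using hasDerivAt_pow 2 t)
  obtain ⟨η, hη, hslope⟩ := exists_deriv_eq_slope (deriv f) (by linarith [ht.1] : x - t < x + t)
    hdiff'.continuous.continuousOn hdiff'.differentiableOn
  refine ⟨η, ⟨by linarith [hη.1, ht.2], by linarith [hη.2, ht.2]⟩, ?_⟩
  rw [hslope, div_eq_div_iff (by positivity) (by linarith [ht.1])]
  simp only [add_zero, sub_zero] at hcauchy
  linear_combination -hcauchy

lemma exists_pos_forall_abs_second_difference_sub_lt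
    (hf : ContDiff ℝ 2 f) (hs : IsCompact s) {ε : ℝ} (hε : 0 < ε) :
    ∃ δ > 0, ∀ x ∈ s, ∀ h, 0 < h → h < δ →
      |(f (x + h) - 2 * f x + f (x - h)) / h ^ 2 - deriv (deriv f) x| < ε := by
  have hcont : Continuous (deriv (deriv f)) := (hf.iterate_deriv' 0 2).continuous
  obtain ⟨δ, hδ, hclose⟩ := hs.exists_pos_forall_dist_lt (fun x _ => hcont.continuousAt) hε
  refine ⟨δ, hδ, fun x hx h hh hhδ => ?_⟩
  obtain ⟨η, hη, heq⟩ := exists_second_difference_eq_deriv_deriv hf x hh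
  rw [heq, abs_sub_comm, ← Real.dist_eq]
  refine hclose x hx η ?_
  rw [Real.dist_eq, abs_lt]
  constructor <;> linarith [hη.1, hη.2]

end DifferenceQuotients

namespace Real

lemma arccos_eq_abs_arctan_sub (a b : ℝ) :
    arccos ((1 + a * b) / (√(1 + a ^ 2) * √(1 + b ^ 2))) = |arctan b - arctan a| := by
  have hcos : cos (arctan b - arctan a) = (1 + a * b) / (√(1 + a ^ 2) * √(1 + b ^ 2)) := by
    rw [cos_sub, cos_arctan, sin_arctan, cos_arctan, sin_arctan]
    field_simp
  have hle : |arctan b - arctan a| ≤ π := by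
    rw [abs_le]
    constructor <;> linarith [arctan_lt_pi_div_two a, neg_pi_div_two_lt_arctan a,
      arctan_lt_pi_div_two b, neg_pi_div_two_lt_arctan b]
  rw [← hcos, ← cos_abs, arccos_cos (abs_nonneg _) hle]

lemma exists_mem_uIcc_arctan_sub_eq (a b : ℝ) :
    ∃ c ∈ uIcc a b, arctan b - arctan a = (b - a) / (1 + c ^ 2) := by
  wlog hab : a < b generalizing a b
  · rcases (not_lt.1 hab).eq_or_lt with rfl | hba
    · exact ⟨_, left_mem_uIcc, by simp⟩
    obtain ⟨c, hc, heq⟩ := this b a hba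
    exact ⟨c, uIcc_comm a b ▸ hc, by linear_combination -heq⟩
  obtain ⟨c, hc, hslope⟩ :=
    exists_deriv_eq_slope arctan hab continuous_arctan.continuousOn
      differentiable_arctan.differentiableOn
  refine ⟨c, Icc_subset_uIcc (Ioo_subset_Icc_self hc), ?_⟩
  rw [deriv_arctan, eq_div_iff (sub_ne_zero.2 hab.ne')] at hslope
  rw [← hslope]
  field_simp

end Real

def bendingDensity (a b c D : ℝ) : ℝ :=
  2 * D ^ 2 * (√(1 + a ^ 2) ^ 3 + √(1 + b ^ 2) ^ 3) /
    (√(1 + a ^ 2) * √(1 + b ^ 2) * (√(1 + a ^ 2) + √(1 + b ^ 2)) ^ 2 * (1 + c ^ 2) ^ 2)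

lemma continuous_bendingDensity :
    Continuous fun p : ℝ × ℝ × ℝ × ℝ => bendingDensity p.1 p.2.1 p.2.2.1 p.2.2.2 := by
  refine Continuous.div (by fun_prop) (by fun_prop) fun p => ?_
  have := sqrt_pos.2 (by positivity : (0 : ℝ) < 1 + p.1 ^ 2)
  have := sqrt_pos.2 (by positivity : (0 : ℝ) < 1 + p.2.1 ^ 2)
  positivity

lemma bendingDensity_self (s D : ℝ) :
    bendingDensity s s s D = D ^ 2 / (1 + s ^ 2) ^ ((5 : ℝ) / 2) := by
  have hpow : (1 + s ^ 2) ^ ((5 : ℝ) / 2) = √(1 + s ^ 2) ^ 5 := by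
    rw [sqrt_eq_rpow, ← rpow_mul_natCast (by positivity)]
    norm_num
  have hsq : √(1 + s ^ 2) ^ 2 = 1 + s ^ 2 := sq_sqrt (by positivity)
  have hpos : 0 < √(1 + s ^ 2) := sqrt_pos.2 (by positivity)
  rw [bendingDensity, hpow]
  set p := √(1 + s ^ 2)
  rw [← hsq]
  field_simp
  ring

/-- The summand `θ_j² (l_j³ + l_{j+1}³) / (l_j l_{j+1} (l_j + l_{j+1})²)` for mesh size `h` and
slopes `a = d_j`, `b = d_{j+1}`. -/
def bendingTerm (h a b : ℝ) : ℝ :=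
  arccos ((1 + a * b) / (√(1 + a ^ 2) * √(1 + b ^ 2))) ^ 2 *
    (((h / 2 * √(1 + a ^ 2)) ^ 3 + (h / 2 * √(1 + b ^ 2)) ^ 3) /
      (h / 2 * √(1 + a ^ 2) * (h / 2 * √(1 + b ^ 2)) *
        (h / 2 * √(1 + a ^ 2) + h / 2 * √(1 + b ^ 2)) ^ 2))

lemma bendingTerm_eq_mul_bendingDensity {h a b c : ℝ} (hh : 0 < h)
    (hc : arctan b - arctan a = (b - a) / (1 + c ^ 2)) :
    bendingTerm h a b = h * bendingDensity a b c ((b - a) / h) := by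
  have := sqrt_pos.2 (by positivity : (0 : ℝ) < 1 + a ^ 2)
  have := sqrt_pos.2 (by positivity : (0 : ℝ) < 1 + b ^ 2)
  rw [bendingTerm, arccos_eq_abs_arctan_sub, sq_abs, hc, bendingDensity]
  field_simp

lemma exists_pos_forall_abs_bendingTerm_sub_le {v : ℝ → ℝ} {s : Set ℝ} (hv : ContDiff ℝ 2 v)
    (hs : IsCompact s) {ε : ℝ} (hε : 0 < ε) :
    ∃ δ > 0, ∀ x ∈ s, ∀ h, 0 < h → h < δ →
      |bendingTerm h ((v x - v (x - h)) / h) ((v (x + h) - v x) / h) -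
        h * (deriv (deriv v) x ^ 2 / (1 + deriv v x ^ 2) ^ ((5 : ℝ) / 2))| ≤ ε * h := by
  set q : ℝ → ℝ × ℝ × ℝ × ℝ := fun x => (deriv v x, deriv v x, deriv v x, deriv (deriv v) x)
  have hq : Continuous q := by
    have := (hv.iterate_deriv' 0 2).continuous
    have := hv.continuous_deriv one_le_two
    fun_prop
  obtain ⟨ρ, hρ, hclose⟩ := (hs.image hq).exists_pos_forall_dist_lt
    (fun p _ => continuous_bendingDensity.continuousAt) hε
  obtain ⟨δ₁, hδ₁, hslope⟩ := exists_pos_forall_abs_slope_sub_deriv_lt (hv.of_le one_le_two) hs hρ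
  obtain ⟨δ₂, hδ₂, hsecond⟩ := exists_pos_forall_abs_second_difference_sub_lt hv hs hρ
  refine ⟨min δ₁ δ₂, lt_min hδ₁ hδ₂, fun x hx h hh hhδ => ?_⟩
  set a := (v x - v (x - h)) / h
  set b := (v (x + h) - v x) / h
  have ha : |a - deriv v x| < ρ := by
    simpa [a, sub_sub_cancel] using
      hslope x hx (x - h) x (by linarith) ⟨by linarith, le_rfl⟩ (by linarith [min_le_left δ₁ δ₂])
  have hb : |b - deriv v x| < ρ := by
    simpa [b, add_sub_cancel_left] using
      hslope x hx x (x + h) (by linarith) ⟨le_rfl, by linarith⟩ (by linarith [min_le_left δ₁ δ₂])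
  have hD : |(b - a) / h - deriv (deriv v) x| < ρ := by
    have hba : (b - a) / h = (v (x + h) - 2 * v x + v (x - h)) / h ^ 2 := by
      simp only [a, b]
      field_simp
      ring
    rw [hba]
    exact hsecond x hx h hh (by linarith [min_le_right δ₁ δ₂])
  obtain ⟨c, hcab, hc⟩ := exists_mem_uIcc_arctan_sub_eq a b
  have hcc : |c - deriv v x| < ρ := by
    have hball : uIcc a b ⊆ Ioo (deriv v x - ρ) (deriv v x + ρ) :=
      ordConnected_Ioo.uIcc_subset (by rw [mem_Ioo]; constructor <;> linarith [abs_lt.1 ha])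
        (by rw [mem_Ioo]; constructor <;> linarith [abs_lt.1 hb])
    rw [abs_lt]
    constructor <;> linarith [(hball hcab).1, (hball hcab).2]
  have hdist : dist (q x) (a, b, c, (b - a) / h) < ρ := by
    simp only [q, Prod.dist_eq, Real.dist_eq, abs_sub_comm (deriv v x),
      abs_sub_comm (deriv (deriv v) x)]
    exact max_lt ha (max_lt hb (max_lt hcc hD))
  have hΦ := hclose (q x) (mem_image_of_mem q hx) _ hdist
  rw [Real.dist_eq, abs_sub_comm] at hΦ
  rw [bendingTerm_eq_mul_bendingDensity hh hc, ← bendingDensity_self, ← mul_sub, abs_mul,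
    abs_of_pos hh, mul_comm ε]
  exact mul_le_mul_of_nonneg_left hΦ.le hh.le

lemma tendsto_sum_Icc_of_abs_sub_le {T R : ℕ → ℤ → ℝ} {L : ℝ}
    (hR : Tendsto (fun N : ℕ => ∑ j ∈ Finset.Icc (1 : ℤ) N, R N j) atTop (𝓝 L))
    (hTR : ∀ ε > 0, ∀ᶠ N : ℕ in atTop, ∀ j ∈ Finset.Icc (1 : ℤ) N, |T N j - R N j| ≤ ε / N) :
    Tendsto (fun N : ℕ => ∑ j ∈ Finset.Icc (1 : ℤ) N, T N j) atTop (𝓝 L) := by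
  have hdiff : Tendsto (fun N : ℕ => ∑ j ∈ Finset.Icc (1 : ℤ) N, (T N j - R N j)) atTop (𝓝 0) := by
    refine Metric.tendsto_nhds.2 fun ε hε => ?_
    filter_upwards [hTR (ε / 2) (by positivity), eventually_ne_atTop 0] with N hN hN0
    rw [Real.dist_0_eq_abs]
    calc |∑ j ∈ Finset.Icc (1 : ℤ) N, (T N j - R N j)|
        ≤ ∑ j ∈ Finset.Icc (1 : ℤ) N, |T N j - R N j| := Finset.abs_sum_le_sum_abs _ _
      _ ≤ ∑ j ∈ Finset.Icc (1 : ℤ) N, ε / 2 / N := Finset.sum_le_sum hN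
      _ = ε / 2 := by
        simp only [Finset.sum_const, Int.card_Icc, add_sub_cancel_right, Int.toNat_natCast,
          nsmul_eq_mul]
        field_simp
      _ < ε := by linarith
  simpa [Finset.sum_sub_distrib] using hR.add hdiff

lemma xj_sub_one (N : ℕ) (j : ℤ) : xj N (j - 1) = xj N j - 1 / N := by
  simp only [xj]
  push_cast
  ring

lemma xj_add_one (N : ℕ) (j : ℤ) : xj N (j + 1) = xj N j + 1 / N := by
  simp only [xj]
  push_cast
  ring

lemma xj_mem_Icc {N : ℕ} {j : ℤ} (hj : j ∈ Finset.Icc (1 : ℤ) N) : xj N j ∈ Icc (0 : ℝ) 1 := by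
  rw [Finset.mem_Icc] at hj
  have h0 : (0 : ℝ) ≤ j := by exact_mod_cast (by omega : (0 : ℤ) ≤ j)
  have hN : (j : ℝ) ≤ N := by exact_mod_cast hj.2
  rw [xj, mul_one_div]
  exact ⟨by positivity, div_le_one_of_le₀ hN (by positivity)⟩

lemma sum_Icc_integral_xj {G : ℝ → ℝ} (hG : Continuous G) {N : ℕ} (hN : N ≠ 0) :
    ∑ j ∈ Finset.Icc (1 : ℤ) N, ∫ x in xj N (j - 1)..xj N j, G x = ∫ x in Ioo (0 : ℝ) 1, G x := by
  rw [Int.Icc_eq_finset_map, Finset.sum_map]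
  calc _ = ∑ k ∈ Finset.range N, ∫ x in (k : ℝ) / N..((k + 1 : ℕ) : ℝ) / N, G x := by
        simp only [Function.Embedding.trans_apply, Nat.castEmbedding_apply,
          addLeftEmbedding_apply, add_sub_cancel_right, Int.toNat_natCast]
        refine Finset.sum_congr rfl fun k _ => ?_
        simp only [xj, add_sub_cancel_left]
        push_cast
        ring_nf
    _ = ∫ x in (0 : ℝ)..1, G x := by
        rw [intervalIntegral.sum_integral_adjacent_intervals fun k _ => hG.intervalIntegrable _ _]
        simp [hN]
    _ = ∫ x in Ioo (0 : ℝ) 1, G x := by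
        rw [intervalIntegral.integral_of_le zero_le_one, integral_Ioc_eq_integral_Ioo]

lemma tendsto_sum_Icc_one_div_mul_xj {G : ℝ → ℝ} (hG : Continuous G) :
    Tendsto (fun N : ℕ => ∑ j ∈ Finset.Icc (1 : ℤ) N, 1 / (N : ℝ) * G (xj N j)) atTop
      (𝓝 (∫ x in Ioo (0 : ℝ) 1, G x)) := by
  refine tendsto_sum_Icc_of_abs_sub_le (R := fun N j => ∫ x in xj N (j - 1)..xj N j, G x)
    (tendsto_const_nhds.congr' ?_) fun ε hε => ?_
  · filter_upwards [eventually_ne_atTop 0] with N hN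
    exact (sum_Icc_integral_xj hG hN).symm
  obtain ⟨δ, hδ, hclose⟩ := (isCompact_Icc (a := (0 : ℝ)) (b := 1)).exists_pos_forall_dist_lt
    (fun x _ => hG.continuousAt) hε
  filter_upwards [tendsto_one_div_atTop_nhds_zero_nat.eventually (gt_mem_nhds hδ)] with N hN j hj
  set x := xj N j
  have hsub : 1 / N * G x - ∫ y in x - 1 / N..x, G y = ∫ y in x - 1 / N..x, (G x - G y) := by
    rw [intervalIntegral.integral_sub intervalIntegrable_const (hG.intervalIntegrable _ _),
      intervalIntegral.integral_const, smul_eq_mul, sub_sub_cancel]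
  rw [xj_sub_one, hsub, ← Real.norm_eq_abs]
  calc ‖∫ y in x - 1 / N..x, (G x - G y)‖ ≤ ε * |x - (x - 1 / N)| := by
        refine intervalIntegral.norm_integral_le_of_norm_le_const fun y hy => ?_
        rw [uIoc_of_le (by simp)] at hy
        refine (hclose x (xj_mem_Icc hj) y ?_).le
        rw [Real.dist_eq, abs_lt]
        constructor <;> linarith [hy.1, hy.2]
    _ = ε / N := by rw [sub_sub_cancel, abs_of_nonneg (by positivity), mul_one_div]

theorem stmt9_general (v : ℝ → ℝ) (hv : ContDiff ℝ 2 v) :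
    Tendsto (fun N : ℕ =>
        ∑ j ∈ Finset.Icc (1 : ℤ) (N : ℤ),
          θq N (fun k : ℤ => v (xj N k)) j ^ 2 *
            ((lq N (fun k : ℤ => v (xj N k)) j ^ 3 +
                lq N (fun k : ℤ => v (xj N k)) (j + 1) ^ 3) /
              (lq N (fun k : ℤ => v (xj N k)) j * lq N (fun k : ℤ => v (xj N k)) (j + 1) *
                (lq N (fun k : ℤ => v (xj N k)) j +
                  lq N (fun k : ℤ => v (xj N k)) (j + 1)) ^ 2)))
      atTop
      (nhds (∫ x in Set.Ioo (0 : ℝ) 1,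
        deriv (deriv v) x ^ 2 / (1 + deriv v x ^ 2) ^ ((5 : ℝ) / 2))) := by
  have hG : Continuous fun x => deriv (deriv v) x ^ 2 / (1 + deriv v x ^ 2) ^ ((5 : ℝ) / 2) := by
    have := (hv.iterate_deriv' 0 2).continuous
    have := hv.continuous_deriv one_le_two
    exact Continuous.div (by fun_prop) ((by fun_prop : Continuous _).rpow_const
      fun _ => Or.inr (by norm_num)) fun x => by positivity
  refine tendsto_sum_Icc_of_abs_sub_le (tendsto_sum_Icc_one_div_mul_xj hG) fun ε hε => ?_
  obtain ⟨δ, hδ, hclose⟩ := exists_pos_forall_abs_bendingTerm_sub_le hv isCompact_Icc hε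
  filter_upwards [tendsto_one_div_atTop_nhds_zero_nat.eventually (gt_mem_nhds hδ),
    eventually_gt_atTop 0] with N hNδ hN j hj
  have := hclose (xj N j) (xj_mem_Icc hj) (1 / N) (by positivity) hNδ
  rw [← xj_sub_one, ← xj_add_one, mul_one_div] at this
  simpa only [bendingTerm, θq, lq, dq, add_sub_cancel_right] using this

/-- Consistency of the polygonal discrete bending energy: the bending energy of the
interpolating polygon `Π_h v` converges to `∫₀¹ v''²/(1+v'²)^{5/2}`. -/
theorem stmt9 (v : ℝ → ℝ) (hv : ContDiff ℝ 2 v) (hper : ∀ x, v (x + 1) = v x) :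
    Tendsto (fun N : ℕ =>
        ∑ j ∈ Finset.Icc (1 : ℤ) (N : ℤ),
          θq N (fun k : ℤ => v (xj N k)) j ^ 2 *
            ((lq N (fun k : ℤ => v (xj N k)) j ^ 3 +
                lq N (fun k : ℤ => v (xj N k)) (j + 1) ^ 3) /
              (lq N (fun k : ℤ => v (xj N k)) j * lq N (fun k : ℤ => v (xj N k)) (j + 1) *
                (lq N (fun k : ℤ => v (xj N k)) j +
                  lq N (fun k : ℤ => v (xj N k)) (j + 1)) ^ 2)))
      atTop
      (nhds (∫ x in Set.Ioo (0 : ℝ) 1,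
        deriv (deriv v) x ^ 2 / (1 + deriv v x ^ 2) ^ ((5 : ℝ) / 2))) :=
  stmt9_general v hv

end
end

section
/- Total-variation-of-angle lower bound for bending plus tension: Let N ≥ 1 be an integer, h = 1/N, let v = (v_j) be a discrete curve, and let C, σ > 0. Then for all indices j₀, j₁ with 1 ≤ j₀ ≤ j₁ ≤ N, (C/2)·Σ_{j=1}^N θ_j²·(l_j³ + l_{j+1}³)/(l_j·l_{j+1}·(l_j + l_{j+1})²) + σ·Σ_{j=1}^N 2·l_j ≥ √(2Cσ)·|arctan(d_{j₁}) − arctan(d_{j₀})|. -/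
open Filter MeasureTheory

noncomputable section

/-!
The turning angle `θ_j` is the jump `|arctan d_{j+1} - arctan d_j|` of the tangent angle, so the
change of tangent angle between `j₀` and `j₁` is at most `∑ θ_j`. Each `θ_j` is paid for by AM-GM,
`√(2Cσ) θ ≤ (C/2) θ² w + σ / w`, where `w` is the bending weight of the neighbouring half lengths
`l, m`; since `l³ + m³ ≥ l m (l + m)` we have `1 / w ≤ l + m`, and by periodicity
`∑ (l_j + l_{j+1}) = ∑ 2 l_j` is exactly the tension sum.
-/

theorem Finset.sum_Ico_sub_int {G : Type*} [AddCommGroup G] (f : ℤ → G) {a b : ℤ} (hab : a ≤ b) :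
    ∑ j ∈ Finset.Ico a b, (f (j + 1) - f j) = f b - f a := by
  induction b, hab using Int.leInduction with
  | base => simp
  | succ b hab ih =>
    rw [← Finset.insert_Ico_right_eq_Ico_add_one hab, Finset.sum_insert Finset.right_notMem_Ico, ih]
    abel

theorem Function.Periodic.sum_Icc_comp_add_one {G : Type*} [AddCommGroup G] {f : ℤ → G} {N : ℕ}
    (hf : Function.Periodic f N) :
    ∑ j ∈ Finset.Icc (1 : ℤ) N, f (j + 1) = ∑ j ∈ Finset.Icc (1 : ℤ) N, f j := by
  rw [← sub_eq_zero, ← Finset.sum_sub_distrib, ← Finset.Ico_add_one_right_eq_Icc,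
    Finset.sum_Ico_sub_int f (by omega), add_comm, hf, sub_self]

theorem norm_sub_le_sum_Ico_norm_sub {E : Type*} [SeminormedAddCommGroup E] (f : ℤ → E) {a b : ℤ}
    (hab : a ≤ b) : ‖f b - f a‖ ≤ ∑ j ∈ Finset.Ico a b, ‖f (j + 1) - f j‖ := by
  rw [← Finset.sum_Ico_sub_int f hab]
  exact norm_sum_le _ _

theorem Real.cos_arctan_sub_arctan (a b : ℝ) :
    Real.cos (Real.arctan b - Real.arctan a) =
      (1 + a * b) / (Real.sqrt (1 + a ^ 2) * Real.sqrt (1 + b ^ 2)) := by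
  rw [Real.cos_sub, Real.cos_arctan, Real.cos_arctan, Real.sin_arctan, Real.sin_arctan]
  field_simp

theorem Real.arccos_div_sqrt_mul_sqrt_eq_abs_arctan_sub (a b : ℝ) :
    Real.arccos ((1 + a * b) / (Real.sqrt (1 + a ^ 2) * Real.sqrt (1 + b ^ 2))) =
      |Real.arctan b - Real.arctan a| := by
  rw [← Real.cos_arctan_sub_arctan, ← Real.cos_abs]
  refine Real.arccos_cos (abs_nonneg _) ?_
  have := Real.arctan_lt_pi_div_two a
  have := Real.arctan_lt_pi_div_two b
  have := Real.neg_pi_div_two_lt_arctan a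
  have := Real.neg_pi_div_two_lt_arctan b
  rw [abs_sub_le_iff]
  constructor <;> linarith

theorem sqrt_two_mul_mul_le_add_div {C σ w : ℝ} (hC : 0 ≤ C) (hσ : 0 ≤ σ) (hw : 0 < w) (θ : ℝ) :
    Real.sqrt (2 * C * σ) * θ ≤ C / 2 * (θ ^ 2 * w) + σ / w := by
  have hsplit : Real.sqrt (2 * C * σ) = Real.sqrt C * Real.sqrt (2 * σ) := by
    rw [mul_comm 2 C, mul_assoc, Real.sqrt_mul hC]
  have hsq := sq_nonneg (Real.sqrt C * θ * w - Real.sqrt (2 * σ))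
  rw [sub_sq, mul_pow, mul_pow, Real.sq_sqrt hC, Real.sq_sqrt (by positivity)] at hsq
  rw [hsplit, ← sub_nonneg]
  have : C / 2 * (θ ^ 2 * w) + σ / w - Real.sqrt C * Real.sqrt (2 * σ) * θ =
      (C * θ ^ 2 * w ^ 2 - 2 * (Real.sqrt C * θ * w) * Real.sqrt (2 * σ) + 2 * σ) / (2 * w) := by
    field_simp
    ring
  rw [this]
  positivity

def bendingWeight (l m : ℝ) : ℝ := (l ^ 3 + m ^ 3) / (l * m * (l + m) ^ 2)

theorem inv_bendingWeight_le_add {l m : ℝ} (hl : 0 < l) (hm : 0 < m) :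
    (bendingWeight l m)⁻¹ ≤ l + m := by
  rw [bendingWeight, inv_div, div_le_iff₀ (by positivity)]
  nlinarith [mul_nonneg (add_pos hl hm).le (sq_nonneg (l - m))]

theorem sqrt_two_mul_mul_le_bending_add_tension {C σ l m : ℝ} (hC : 0 ≤ C) (hσ : 0 ≤ σ)
    (hl : 0 < l) (hm : 0 < m) (θ : ℝ) :
    Real.sqrt (2 * C * σ) * θ ≤ C / 2 * (θ ^ 2 * bendingWeight l m) + σ * (l + m) := by
  have hw : 0 < bendingWeight l m := by unfold bendingWeight; positivity
  calc Real.sqrt (2 * C * σ) * θ ≤ C / 2 * (θ ^ 2 * bendingWeight l m) + σ / bendingWeight l m :=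
        sqrt_two_mul_mul_le_add_div hC hσ hw θ
    _ ≤ C / 2 * (θ ^ 2 * bendingWeight l m) + σ * (l + m) := by
        rw [div_eq_mul_inv σ]
        gcongr
        exact inv_bendingWeight_le_add hl hm

theorem θq_eq_abs_arctan_sub (N : ℕ) (v : ℤ → ℝ) (j : ℤ) :
    θq N v j = |Real.arctan (dq N v (j + 1)) - Real.arctan (dq N v j)| :=
  Real.arccos_div_sqrt_mul_sqrt_eq_abs_arctan_sub _ _

theorem lq_pos {N : ℕ} (hN : 0 < N) (v : ℤ → ℝ) (j : ℤ) : 0 < lq N v j := by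
  unfold lq; positivity

theorem dq_periodic {N : ℕ} {v : ℤ → ℝ} (hv : Function.Periodic v N) :
    Function.Periodic (dq N v) N := by
  intro j
  rw [dq, dq, add_sub_right_comm, hv, hv]

theorem lq_periodic {N : ℕ} {v : ℤ → ℝ} (hv : Function.Periodic v N) :
    Function.Periodic (lq N v) N := by
  intro j
  rw [lq, lq, dq_periodic hv]

theorem abs_arctan_dq_sub_le_sum_θq (N : ℕ) (v : ℤ → ℝ) {j₀ j₁ : ℤ} (hj : j₀ ≤ j₁) :
    |Real.arctan (dq N v j₁) - Real.arctan (dq N v j₀)| ≤ ∑ j ∈ Finset.Ico j₀ j₁, θq N v j := by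
  simpa only [θq_eq_abs_arctan_sub, Real.norm_eq_abs] using
    norm_sub_le_sum_Ico_norm_sub (fun j ↦ Real.arctan (dq N v j)) hj

theorem sqrt_two_mul_mul_sum_θq_le_Bh_add_Th {N : ℕ} (hN : 0 < N) {v : ℤ → ℝ}
    (hv : Function.Periodic v N) {C σ : ℝ} (hC : 0 ≤ C) (hσ : 0 ≤ σ) :
    Real.sqrt (2 * C * σ) * ∑ j ∈ Finset.Icc (1 : ℤ) N, θq N v j ≤ Bh C N v + Th σ N v := by
  have hlength : ∑ j ∈ Finset.Icc (1 : ℤ) N, 2 * lq N v j =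
      ∑ j ∈ Finset.Icc (1 : ℤ) N, (lq N v j + lq N v (j + 1)) := by
    rw [Finset.sum_add_distrib, (lq_periodic hv).sum_Icc_comp_add_one, ← Finset.sum_add_distrib]
    simp only [two_mul]
  rw [Bh, Th, hlength, Finset.mul_sum, Finset.mul_sum, Finset.mul_sum, ← Finset.sum_add_distrib]
  exact Finset.sum_le_sum fun j _ ↦
    sqrt_two_mul_mul_le_bending_add_tension hC hσ (lq_pos hN v j) (lq_pos hN v (j + 1)) _

theorem stmt16_general (N : ℕ) (v : ℤ → ℝ) (hper : ∀ j, v (j + N) = v j)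
    (C σ : ℝ) (hC : 0 < C) (hσ : 0 < σ)
    (j₀ j₁ : ℤ) (hj₀ : 1 ≤ j₀) (hj : j₀ ≤ j₁) (hj₁ : j₁ ≤ N) :
    Real.sqrt (2 * C * σ) * |Real.arctan (dq N v j₁) - Real.arctan (dq N v j₀)| ≤
      C / 2 * ∑ j ∈ Finset.Icc (1 : ℤ) (N : ℤ),
          θq N v j ^ 2 * ((lq N v j ^ 3 + lq N v (j + 1) ^ 3) /
            (lq N v j * lq N v (j + 1) * (lq N v j + lq N v (j + 1)) ^ 2)) +
        σ * ∑ j ∈ Finset.Icc (1 : ℤ) (N : ℤ), 2 * lq N v j := by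
  have hN : 0 < N := by omega
  have hsub : Finset.Ico j₀ j₁ ⊆ Finset.Icc (1 : ℤ) N := fun j hj' ↦ by
    simp only [Finset.mem_Ico, Finset.mem_Icc] at hj' ⊢; omega
  calc Real.sqrt (2 * C * σ) * |Real.arctan (dq N v j₁) - Real.arctan (dq N v j₀)|
      ≤ Real.sqrt (2 * C * σ) * ∑ j ∈ Finset.Icc (1 : ℤ) N, θq N v j := by
        gcongr
        exact (abs_arctan_dq_sub_le_sum_θq N v hj).trans <|
          Finset.sum_le_sum_of_subset_of_nonneg hsub fun j _ _ ↦ Real.arccos_nonneg _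
    _ ≤ Bh C N v + Th σ N v := sqrt_two_mul_mul_sum_θq_le_Bh_add_Th hN hper hC.le hσ.le

/-- Total-variation-of-angle lower bound for bending plus tension. -/
theorem stmt16 (N : ℕ) (hN : 1 ≤ N) (v : ℤ → ℝ) (hper : ∀ j, v (j + N) = v j)
    (C σ : ℝ) (hC : 0 < C) (hσ : 0 < σ)
    (j₀ j₁ : ℤ) (hj₀ : 1 ≤ j₀) (hj : j₀ ≤ j₁) (hj₁ : j₁ ≤ N) :
    Real.sqrt (2 * C * σ) * |Real.arctan (dq N v j₁) - Real.arctan (dq N v j₀)| ≤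
      C / 2 * ∑ j ∈ Finset.Icc (1 : ℤ) (N : ℤ),
          θq N v j ^ 2 * ((lq N v j ^ 3 + lq N v (j + 1) ^ 3) /
            (lq N v j * lq N v (j + 1) * (lq N v j + lq N v (j + 1)) ^ 2)) +
        σ * ∑ j ∈ Finset.Icc (1 : ℤ) (N : ℤ), 2 * lq N v j :=
  stmt16_general N v hper C σ hC hσ j₀ j₁ hj₀ hj hj₁

end
end
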